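/- arXiv:2211.15020 — 2 statements merged into one kernel-verified Lean document; each statement's English description precedes it below -/
import Mathlib

section
/- Define f_x(x,t) = (f(x), 2^{−Φ_x(log₂(1/t))}) mapping the ray R_x = {x}×(0,∞) in Con_h(Z) to R_{f(x)} in Con_h(W). Then for all t₁,t₂ > 0, (1/θ)·ρ_h((x,t₁),(x,t₂)) − k ≤ ρ_h(f_x(x,t₁), f_x(x,t₂)) ≤ θ·ρ_h((x,t₁),(x,t₂)) + k, where k depends only on θ and λ; i.e., f_x is a (θ,k)-rough quasi-isometry of rays. -/
noncomputable section

universe u v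

/-- The hyperbolic-cone distance on `Z × (0,∞)`, viewed as a function on `Z × ℝ`:
`ρ_h((x,s),(y,t)) = 2 log((d(x,y) + max s t)/√(st))`. -/
def rhoH {Z : Type u} [MetricSpace Z] (p q : Z × ℝ) : ℝ :=
  2 * Real.log ((dist p.1 q.1 + max p.2 q.2) / Real.sqrt (p.2 * q.2))

/-- The control function `η_{θ,λ}` of a (θ,λ)-power quasi-symmetry. -/
def etaPQS (theta lam t : ℝ) : ℝ := if t < 1 then lam * t ^ (1/theta) else lam * t ^ theta

/-- `f` satisfies the (θ,λ)-power quasi-symmetry inequality. -/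
def IsPQS {Z : Type u} {W : Type v} [MetricSpace Z] [MetricSpace W]
    (theta lam : ℝ) (f : Z → W) : Prop :=
  ∀ x y z : Z, y ≠ z →
    dist (f x) (f z) / dist (f y) (f z) ≤ etaPQS theta lam (dist x z / dist y z)

/-- `f` is an (α,C)-snowflake mapping. -/
def IsSnowflake {Z : Type u} {W : Type v} [MetricSpace Z] [MetricSpace W]
    (a C : ℝ) (f : Z → W) : Prop :=
  ∀ x y : Z, C⁻¹ * dist x y ^ a ≤ dist (f x) (f y) ∧ dist (f x) (f y) ≤ C * dist x y ^ a

/-- The dyadic annulus `A(x,l) = {z : 2^{-l-1} < d(z,x) ≤ 2^{-l}}`. -/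
def dyadicAnnulus {Z : Type u} [MetricSpace Z] (x : Z) (l : ℤ) : Set Z :=
  {z | (2:ℝ) ^ (-l-1) < dist z x ∧ dist z x ≤ (2:ℝ) ^ (-l)}

/-- The scale spectrum `S_x` of `Z` at `x`. -/
def scaleSpectrum {Z : Type u} [MetricSpace Z] (x : Z) : Set ℤ :=
  {l | (dyadicAnnulus x l).Nonempty}

/-- The scale map `φ_x(l) = sup{l' : ∃ y, 2^{-l-1} < d(y,x) and f(y) ∈ A_W(f(x),l')}`. -/
def phiMap {Z : Type u} {W : Type v} [MetricSpace Z] [MetricSpace W]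
    (f : Z → W) (x : Z) (l : ℤ) : ℤ :=
  sSup {l' : ℤ | ∃ y : Z, (2:ℝ) ^ (-l-1) < dist y x ∧ f y ∈ dyadicAnnulus (f x) l'}

/-- `Z` has at least three points. -/
def AtLeastThree (Z : Type u) : Prop := ∃ a b c : Z, a ≠ b ∧ a ≠ c ∧ b ≠ c

/-- `Φ : ℝ → ℝ` is the piecewise-linear extension of `φ : ℤ → ℤ` defined on `S ⊆ ℤ`:
it agrees with `φ` on `S`, is the linear interpolation on the maximal gaps of `S`,
and has slope 1 beyond a maximal (resp. minimal) element of `S`. -/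
def IsLinearExtension (S : Set ℤ) (phi : ℤ → ℤ) (Phi : ℝ → ℝ) : Prop :=
  (∀ l ∈ S, Phi l = phi l) ∧
  (∀ l₁ ∈ S, ∀ l₂ ∈ S, l₁ < l₂ → (∀ l ∈ S, l ≤ l₁ ∨ l₂ ≤ l) →
    ∀ μ ∈ Set.Icc (0:ℝ) 1,
      Phi ((1-μ) * l₁ + μ * l₂) = (1-μ) * phi l₁ + μ * phi l₂) ∧
  (∀ M ∈ S, (∀ l ∈ S, l ≤ M) → ∀ t : ℝ, (M:ℝ) ≤ t → Phi t = phi M + (t - M)) ∧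
  (∀ m ∈ S, (∀ l ∈ S, m ≤ l) → ∀ t : ℝ, t ≤ (m:ℝ) → Phi t = phi m + (t - m))

/-- Real-valued variant of `IsLinearExtension`. -/
def IsLinearExtensionR (S : Set ℤ) (phi : ℤ → ℝ) (g : ℝ → ℝ) : Prop :=
  (∀ l ∈ S, g l = phi l) ∧
  (∀ l₁ ∈ S, ∀ l₂ ∈ S, l₁ < l₂ → (∀ l ∈ S, l ≤ l₁ ∨ l₂ ≤ l) →
    ∀ μ ∈ Set.Icc (0:ℝ) 1,
      g ((1-μ) * l₁ + μ * l₂) = (1-μ) * phi l₁ + μ * phi l₂) ∧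
  (∀ M ∈ S, (∀ l ∈ S, l ≤ M) → ∀ t : ℝ, (M:ℝ) ≤ t → g t = phi M + (t - M)) ∧
  (∀ m ∈ S, (∀ l ∈ S, m ≤ l) → ∀ t : ℝ, t ≤ (m:ℝ) → g t = phi m + (t - m))


namespace Stmt16Aux

open Real

lemma two_zpow_eq (m : ℤ) : (2:ℝ) ^ m = (2:ℝ) ^ (m:ℝ) := (Real.rpow_intCast 2 m).symm

lemma one_le_two_rpow {e : ℝ} (he : 0 ≤ e) : (1:ℝ) ≤ (2:ℝ) ^ e := by
  calc (1:ℝ) = (2:ℝ) ^ (0:ℝ) := (Real.rpow_zero 2).symm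
  _ ≤ 2 ^ e := Real.rpow_le_rpow_of_exponent_le one_le_two he

lemma eta_le_high {theta lam t r : ℝ} (htheta : 1 ≤ theta) (hlam : 1 ≤ lam)
    (ht : 0 ≤ t) (htr : t ≤ r) (hr : 1 ≤ r) : etaPQS theta lam t ≤ lam * r ^ theta := by
  have h0 : (0:ℝ) < theta := lt_of_lt_of_le one_pos htheta
  have hlam0 : (0:ℝ) ≤ lam := by linarith
  have hr1 : (1:ℝ) ≤ r ^ theta := by
    calc (1:ℝ) = (1:ℝ) ^ theta := (Real.one_rpow theta).symm
    _ ≤ r ^ theta := Real.rpow_le_rpow zero_le_one hr h0.le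
  unfold etaPQS
  split_ifs with h
  · have h1 : t ^ (1/theta) ≤ 1 := Real.rpow_le_one ht h.le (by positivity)
    nlinarith
  · have h1 : t ^ theta ≤ r ^ theta := Real.rpow_le_rpow ht htr h0.le
    nlinarith

lemma eta_le_low {theta lam t r : ℝ} (htheta : 1 ≤ theta) (hlam : 1 ≤ lam)
    (ht : 0 ≤ t) (htr : t ≤ r) (hr : r ≤ 1) : etaPQS theta lam t ≤ lam * r ^ (1/theta) := by
  have h0 : (0:ℝ) < theta := lt_of_lt_of_le one_pos htheta
  have hlam0 : (0:ℝ) ≤ lam := by linarith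
  unfold etaPQS
  split_ifs with h
  · have h1 : t ^ (1/theta) ≤ r ^ (1/theta) := Real.rpow_le_rpow ht htr (by positivity)
    nlinarith
  · push_neg at h
    have ht1 : t = 1 := le_antisymm (htr.trans hr) h
    have hr1 : r = 1 := le_antisymm hr (ht1 ▸ htr)
    simp [ht1, hr1]

lemma rhoH_self {Z : Type u} [MetricSpace Z] (x : Z) {s t : ℝ} (hs : 0 < s) (ht : 0 < t) :
    rhoH (x, s) (x, t) = |Real.log s - Real.log t| := by
  have hst : 0 < s * t := mul_pos hs ht
  have hsq : (0:ℝ) < Real.sqrt (s*t) := Real.sqrt_pos.2 hst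
  unfold rhoH
  simp only [dist_self, zero_add]
  rcases le_total s t with h | h
  · have hlog : Real.log s ≤ Real.log t := (Real.log_le_log_iff hs ht).2 h
    rw [max_eq_right h, Real.log_div ht.ne' hsq.ne', Real.log_sqrt hst.le,
      Real.log_mul hs.ne' ht.ne', abs_of_nonpos (by linarith)]
    ring
  · have hlog : Real.log t ≤ Real.log s := (Real.log_le_log_iff ht hs).2 h
    rw [max_eq_left h, Real.log_div hs.ne' hsq.ne', Real.log_sqrt hst.le,
      Real.log_mul hs.ne' ht.ne', abs_of_nonneg (by linarith)]
    ring

lemma exp_cast1 (l : ℤ) : (2:ℝ) ^ (-l-1) = (2:ℝ) ^ (-(l:ℝ)-1) := by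
  rw [two_zpow_eq]
  congr 1
  push_cast
  ring

lemma exp_cast2 (l : ℤ) : (2:ℝ) ^ (-l) = (2:ℝ) ^ (-(l:ℝ)) := by
  rw [two_zpow_eq]
  congr 1
  push_cast
  ring

lemma mem_annulus_iff {Z : Type u} [MetricSpace Z] {x z : Z} {l : ℤ} :
    z ∈ dyadicAnnulus x l ↔ ((2:ℝ) ^ (-(l:ℝ)-1) < dist z x ∧ dist z x ≤ (2:ℝ) ^ (-(l:ℝ))) := by
  unfold dyadicAnnulus
  rw [Set.mem_setOf_eq, exp_cast1, exp_cast2]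

lemma mem_annulus_floor {W : Type v} [MetricSpace W] {c w : W} (h : 0 < dist w c) :
    w ∈ dyadicAnnulus c ⌊-Real.logb 2 (dist w c)⌋ := by
  have h1 : (⌊-Real.logb 2 (dist w c)⌋ : ℝ) ≤ -Real.logb 2 (dist w c) := Int.floor_le _
  have h2 : -Real.logb 2 (dist w c) < ⌊-Real.logb 2 (dist w c)⌋ + 1 := Int.lt_floor_add_one _
  have hd : (2:ℝ) ^ (Real.logb 2 (dist w c)) = dist w c :=
    Real.rpow_logb two_pos (by norm_num) h
  rw [mem_annulus_iff]
  constructor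
  · have h3 := Real.rpow_lt_rpow_of_exponent_lt (x := 2) one_lt_two
      (show -((⌊-Real.logb 2 (dist w c)⌋:ℤ):ℝ) - 1 < Real.logb 2 (dist w c) by linarith)
    rwa [hd] at h3
  · have h3 := Real.rpow_le_rpow_of_exponent_le (x := 2) one_le_two
      (show Real.logb 2 (dist w c) ≤ -((⌊-Real.logb 2 (dist w c)⌋:ℤ):ℝ) by linarith)
    rwa [hd] at h3

variable {Z : Type u} {W : Type v} [MetricSpace Z] [MetricSpace W]

lemma pqs_core {theta lam : ℝ} {f : Z → W} (hinj : Function.Injective f)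
    (hf : IsPQS theta lam f) {x y : Z} (b : Z) (hy : y ≠ x) :
    dist (f b) (f x) ≤ etaPQS theta lam (dist b x / dist y x) * dist (f y) (f x) := by
  have hd : 0 < dist (f y) (f x) := dist_pos.2 fun h => hy (hinj h)
  exact (div_le_iff₀ hd).1 (hf b y x hy)

lemma phiMap_eq (f : Z → W) (x : Z) (l : ℤ) :
    phiMap f x l =
      sSup {l' : ℤ | ∃ y : Z, (2:ℝ) ^ (-(l:ℝ)-1) < dist y x ∧ f y ∈ dyadicAnnulus (f x) l'} := by
  unfold phiMap
  congr 1
  ext l'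
  constructor
  · rintro ⟨y, h1, h2⟩
    exact ⟨y, by rwa [exp_cast1] at h1, h2⟩
  · rintro ⟨y, h1, h2⟩
    exact ⟨y, by rwa [← exp_cast1] at h1, h2⟩

lemma phiMap_spec {theta lam : ℝ} (htheta : 1 ≤ theta) (hlam : 1 ≤ lam)
    {f : Z → W} (hinj : Function.Injective f) (hf : IsPQS theta lam f) {x : Z} {l : ℤ}
    (hl : l ∈ scaleSpectrum x) :
    (∃ y : Z, (2:ℝ) ^ (-(l:ℝ)-1) < dist y x ∧ f y ∈ dyadicAnnulus (f x) (phiMap f x l)) ∧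
    (∀ y : Z, (2:ℝ) ^ (-(l:ℝ)-1) < dist y x → ∀ l' : ℤ,
      f y ∈ dyadicAnnulus (f x) l' → l' ≤ phiMap f x l) := by
  obtain ⟨z, hz⟩ := hl
  rw [mem_annulus_iff] at hz
  obtain ⟨hz1, hz2⟩ := hz
  have hzx : z ≠ x := by
    intro e
    rw [e, dist_self] at hz1
    exact absurd hz1 (not_lt.2 (by positivity))
  have hfz : 0 < dist (f z) (f x) := dist_pos.2 fun e => hzx (hinj e)
  have hne : {l' : ℤ | ∃ y : Z, (2:ℝ) ^ (-(l:ℝ)-1) < dist y x ∧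
      f y ∈ dyadicAnnulus (f x) l'}.Nonempty :=
    ⟨⌊-Real.logb 2 (dist (f z) (f x))⌋, z, hz1, mem_annulus_floor hfz⟩
  have hbdd : BddAbove {l' : ℤ | ∃ y : Z, (2:ℝ) ^ (-(l:ℝ)-1) < dist y x ∧
      f y ∈ dyadicAnnulus (f x) l'} := by
    use ⌈Real.logb 2 lam + theta - Real.logb 2 (dist (f z) (f x))⌉
    rintro l' ⟨y, hy1, hy2⟩
    rw [mem_annulus_iff] at hy2
    have hy0 : 0 < dist y x := lt_trans (by positivity) hy1
    have hyx : y ≠ x := fun e => by rw [e, dist_self] at hy0; exact lt_irrefl _ hy0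
    have hfy : 0 < dist (f y) (f x) := dist_pos.2 fun e => hyx (hinj e)
    have hratio : dist z x / dist y x ≤ 2 := by
      have h2 : ((2:ℝ) ^ (-(l:ℝ))) / ((2:ℝ) ^ (-(l:ℝ)-1)) = 2 := by
        rw [← Real.rpow_sub two_pos]
        norm_num
      calc dist z x / dist y x ≤ (2:ℝ)^(-(l:ℝ)) / (2:ℝ)^(-(l:ℝ)-1) :=
            div_le_div₀ (by positivity) hz2 (by positivity) hy1.le
      _ = 2 := h2
    have hcore := pqs_core hinj hf (x := x) z hyx
    have heta := eta_le_high (r := 2) htheta hlam (by positivity) hratio one_le_two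
    have hchain : dist (f z) (f x) ≤ lam * (2:ℝ)^(theta + -(l':ℝ)) := by
      rw [Real.rpow_add two_pos, ← mul_assoc]
      calc dist (f z) (f x)
          ≤ etaPQS theta lam (dist z x / dist y x) * dist (f y) (f x) := hcore
      _ ≤ lam * (2:ℝ)^theta * dist (f y) (f x) :=
            mul_le_mul_of_nonneg_right heta dist_nonneg
      _ ≤ lam * (2:ℝ)^theta * (2:ℝ)^(-(l':ℝ)) :=
            mul_le_mul_of_nonneg_left hy2.2 (by positivity)
    have hlog := Real.logb_le_logb_of_le one_lt_two hfz hchain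
    rw [Real.logb_mul (by positivity) (by positivity),
      Real.logb_rpow two_pos (by norm_num)] at hlog
    have hfin : (l' : ℝ) ≤ Real.logb 2 lam + theta - Real.logb 2 (dist (f z) (f x)) := by
      linarith
    exact_mod_cast hfin.trans (Int.le_ceil _)
  constructor
  · have hmem := Int.csSup_mem hne hbdd
    rw [← phiMap_eq] at hmem
    exact hmem
  · intro y h1 l' h2
    rw [phiMap_eq]
    exact le_csSup hbdd ⟨y, h1, h2⟩

lemma phi_lower {theta lam : ℝ} (htheta : 1 ≤ theta) (hlam : 1 ≤ lam)
    {f : Z → W} (hinj : Function.Injective f) (hf : IsPQS theta lam f) {x : Z} {l : ℤ}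
    (hl : l ∈ scaleSpectrum x) {b : Z} (hb : (2:ℝ)^(-(l:ℝ)-1) < dist b x) :
    (2:ℝ)^(-(phiMap f x l:ℝ)-1) < dist (f b) (f x) := by
  have hb0 : 0 < dist b x := lt_trans (by positivity) hb
  have hbx : b ≠ x := fun e => by rw [e, dist_self] at hb0; exact lt_irrefl _ hb0
  have hfb : 0 < dist (f b) (f x) := dist_pos.2 fun e => hbx (hinj e)
  have hmem := (phiMap_spec htheta hlam hinj hf hl).2 b hb _ (mem_annulus_floor hfb)
  have h1 := (mem_annulus_iff.1 (mem_annulus_floor hfb)).1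
  refine lt_of_le_of_lt ?_ h1
  apply Real.rpow_le_rpow_of_exponent_le one_le_two
  have : ((⌊-Real.logb 2 (dist (f b) (f x))⌋ : ℤ) : ℝ) ≤ ((phiMap f x l : ℤ) : ℝ) := by
    exact_mod_cast hmem
  linarith

lemma phi_diff_bounds {theta lam : ℝ} (htheta : 1 ≤ theta) (hlam : 1 ≤ lam)
    {f : Z → W} (hinj : Function.Injective f) (hf : IsPQS theta lam f) {x : Z} {l₁ l₂ : ℤ}
    (h₁ : l₁ ∈ scaleSpectrum x) (h₂ : l₂ ∈ scaleSpectrum x) (hle : l₁ ≤ l₂) :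
    ((l₂:ℝ)-l₁)/theta - (theta + 1/theta + Real.logb 2 lam + 2) ≤
      (phiMap f x l₂ : ℝ) - phiMap f x l₁ ∧
    (phiMap f x l₂ : ℝ) - phiMap f x l₁ ≤
      theta * ((l₂:ℝ)-l₁) + (theta + 1/theta + Real.logb 2 lam + 2) := by
  have hθ0 : (0:ℝ) < theta := by linarith
  have hL0 : 0 ≤ Real.logb 2 lam := Real.logb_nonneg one_lt_two hlam
  have hlecast : (l₁:ℝ) ≤ (l₂:ℝ) := by exact_mod_cast hle
  obtain ⟨y₁, hy₁d, hy₁m⟩ := (phiMap_spec htheta hlam hinj hf h₁).1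
  obtain ⟨y₂, hy₂d, hy₂m⟩ := (phiMap_spec htheta hlam hinj hf h₂).1
  rw [mem_annulus_iff] at hy₁m hy₂m
  obtain ⟨b₁, hb₁⟩ := id h₁
  obtain ⟨b₂, hb₂⟩ := id h₂
  rw [mem_annulus_iff] at hb₁ hb₂
  have hy₁0 : 0 < dist y₁ x := lt_trans (by positivity) hy₁d
  have hy₂0 : 0 < dist y₂ x := lt_trans (by positivity) hy₂d
  have hy₁x : y₁ ≠ x := fun e => by rw [e, dist_self] at hy₁0; exact lt_irrefl _ hy₁0
  have hy₂x : y₂ ≠ x := fun e => by rw [e, dist_self] at hy₂0; exact lt_irrefl _ hy₂0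
  constructor
  · -- lower bound
    rcases eq_or_lt_of_le hle with heq | hlt
    · subst heq
      have : ((l₁:ℝ) - l₁)/theta = 0 := by simp
      rw [this]
      have h1θ : 0 < 1/theta := by positivity
      linarith
    · have hA := phi_lower htheta hlam hinj hf h₂
        (b := b₂) (lt_of_le_of_lt (Real.rpow_le_rpow_of_exponent_le one_le_two (by linarith)) hb₂.1)
      have hratio : dist b₂ x / dist y₁ x ≤ (2:ℝ) ^ ((l₁:ℝ) + 1 - l₂) := by
        calc dist b₂ x / dist y₁ x ≤ (2:ℝ)^(-(l₂:ℝ)) / (2:ℝ)^(-(l₁:ℝ)-1) :=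
              div_le_div₀ (by positivity) hb₂.2 (by positivity) hy₁d.le
        _ = (2:ℝ)^((l₁:ℝ) + 1 - l₂) := by
              rw [← Real.rpow_sub two_pos]
              congr 1
              ring
      have hlt1 : ((l₁:ℝ) + 1 : ℝ) ≤ l₂ := by exact_mod_cast hlt
      have hr1 : (2:ℝ)^((l₁:ℝ) + 1 - l₂) ≤ 1 := by
        calc (2:ℝ)^((l₁:ℝ) + 1 - l₂) ≤ (2:ℝ)^(0:ℝ) :=
              Real.rpow_le_rpow_of_exponent_le one_le_two (by linarith)
        _ = 1 := Real.rpow_zero 2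
      have heta := eta_le_low htheta hlam (by positivity) hratio hr1
      rw [← Real.rpow_mul (by norm_num : (0:ℝ) ≤ 2)] at heta
      have hcore := pqs_core hinj hf (x := x) b₂ hy₁x
      have hchain : (2:ℝ)^(-(phiMap f x l₂:ℝ)-1) <
          lam * (2:ℝ)^(((l₁:ℝ)+1-l₂)*(1/theta) + -(phiMap f x l₁:ℝ)) := by
        rw [Real.rpow_add two_pos, ← mul_assoc]
        calc (2:ℝ)^(-(phiMap f x l₂:ℝ)-1) < dist (f b₂) (f x) := hA
        _ ≤ etaPQS theta lam (dist b₂ x / dist y₁ x) * dist (f y₁) (f x) := hcore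
        _ ≤ lam * (2:ℝ)^(((l₁:ℝ)+1-l₂)*(1/theta)) * dist (f y₁) (f x) :=
              mul_le_mul_of_nonneg_right heta dist_nonneg
        _ ≤ lam * (2:ℝ)^(((l₁:ℝ)+1-l₂)*(1/theta)) * (2:ℝ)^(-(phiMap f x l₁:ℝ)) :=
              mul_le_mul_of_nonneg_left hy₁m.2 (by positivity)
      have hlog := Real.logb_lt_logb one_lt_two (by positivity) hchain
      rw [Real.logb_mul (by positivity) (by positivity),
        Real.logb_rpow two_pos (by norm_num),
        Real.logb_rpow two_pos (by norm_num)] at hlog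
      have e : ((l₁:ℝ)+1-l₂)*(1/theta) = 1/theta - ((l₂:ℝ)-l₁)/theta := by ring
      rw [e] at hlog
      linarith
  · -- upper bound
    have hA := phi_lower htheta hlam hinj hf h₁ (b := b₁) hb₁.1
    have hratio : dist b₁ x / dist y₂ x ≤ (2:ℝ) ^ ((l₂:ℝ) - l₁ + 1) := by
      calc dist b₁ x / dist y₂ x ≤ (2:ℝ)^(-(l₁:ℝ)) / (2:ℝ)^(-(l₂:ℝ)-1) :=
            div_le_div₀ (by positivity) hb₁.2 (by positivity) hy₂d.le
      _ = (2:ℝ)^((l₂:ℝ) - l₁ + 1) := by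
            rw [← Real.rpow_sub two_pos]
            congr 1
            ring
    have hr1 : (1:ℝ) ≤ (2:ℝ)^((l₂:ℝ)-l₁+1) := one_le_two_rpow (by linarith)
    have heta := eta_le_high htheta hlam (by positivity) hratio hr1
    rw [← Real.rpow_mul (by norm_num : (0:ℝ) ≤ 2)] at heta
    have hcore := pqs_core hinj hf (x := x) b₁ hy₂x
    have hchain : (2:ℝ)^(-(phiMap f x l₁:ℝ)-1) <
        lam * (2:ℝ)^(((l₂:ℝ)-l₁+1)*theta + -(phiMap f x l₂:ℝ)) := by
      rw [Real.rpow_add two_pos, ← mul_assoc]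
      calc (2:ℝ)^(-(phiMap f x l₁:ℝ)-1) < dist (f b₁) (f x) := hA
      _ ≤ etaPQS theta lam (dist b₁ x / dist y₂ x) * dist (f y₂) (f x) := hcore
      _ ≤ lam * (2:ℝ)^(((l₂:ℝ)-l₁+1)*theta) * dist (f y₂) (f x) :=
            mul_le_mul_of_nonneg_right heta dist_nonneg
      _ ≤ lam * (2:ℝ)^(((l₂:ℝ)-l₁+1)*theta) * (2:ℝ)^(-(phiMap f x l₂:ℝ)) :=
            mul_le_mul_of_nonneg_left hy₂m.2 (by positivity)
    have hlog := Real.logb_lt_logb one_lt_two (by positivity) hchain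
    rw [Real.logb_mul (by positivity) (by positivity),
      Real.logb_rpow two_pos (by norm_num),
      Real.logb_rpow two_pos (by norm_num)] at hlog
    have e : ((l₂:ℝ)-l₁+1)*theta = theta*((l₂:ℝ)-l₁) + theta := by ring
    rw [e] at hlog
    have h1θ : 0 < 1/theta := by positivity
    linarith

end Stmt16Aux

namespace Stmt16Aux

lemma Phi_global {S : Set ℤ} {phi : ℤ → ℤ} {Phi : ℝ → ℝ} {theta C : ℝ}
    (htheta : 1 ≤ theta) (hC : 0 ≤ C) (hS : S.Nonempty)
    (hphi : ∀ l₁ ∈ S, ∀ l₂ ∈ S, l₁ ≤ l₂ →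
      ((l₂:ℝ) - l₁)/theta - C ≤ (phi l₂ : ℝ) - phi l₁ ∧
      (phi l₂:ℝ) - phi l₁ ≤ theta * ((l₂:ℝ) - l₁) + C)
    (hPhi : IsLinearExtension S phi Phi) :
    ∀ s t : ℝ, s ≤ t →
      (t - s)/theta - 4*C ≤ Phi t - Phi s ∧ Phi t - Phi s ≤ theta*(t-s) + 4*C := by
  obtain ⟨hOn, hGap, hAbove, hBelow⟩ := hPhi
  have hθ0 : (0:ℝ) < theta := by linarith
  -- basic combinators
  have Bmono : ∀ s t c c' : ℝ, c ≤ c' →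
      ((t - s)/theta - c ≤ Phi t - Phi s ∧ Phi t - Phi s ≤ theta*(t-s) + c) →
      ((t - s)/theta - c' ≤ Phi t - Phi s ∧ Phi t - Phi s ≤ theta*(t-s) + c') := by
    rintro s t c c' hcc ⟨h1, h2⟩
    exact ⟨by linarith, by linarith⟩
  have Bcomp : ∀ s u t c₁ c₂ : ℝ,
      ((u - s)/theta - c₁ ≤ Phi u - Phi s ∧ Phi u - Phi s ≤ theta*(u-s) + c₁) →
      ((t - u)/theta - c₂ ≤ Phi t - Phi u ∧ Phi t - Phi u ≤ theta*(t-u) + c₂) →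
      ((t - s)/theta - (c₁+c₂) ≤ Phi t - Phi s ∧ Phi t - Phi s ≤ theta*(t-s) + (c₁+c₂)) := by
    rintro s u t c₁ c₂ ⟨a1, a2⟩ ⟨b1, b2⟩
    have e : (t - s)/theta = (u - s)/theta + (t - u)/theta := by ring
    constructor
    · rw [e]; linarith
    · have e2 : theta*(t-s) = theta*(u-s) + theta*(t-u) := by ring
      rw [e2]; linarith
  have Btriv : ∀ u c : ℝ, 0 ≤ c →
      ((u - u)/theta - c ≤ Phi u - Phi u ∧ Phi u - Phi u ≤ theta*(u-u) + c) := by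
    intro u c hc
    have e : (u - u)/theta = 0 := by simp
    constructor
    · rw [e]; linarith
    · have : theta*(u-u) = 0 := by ring
      rw [this]; linarith
  -- gap estimate
  have Bgap : ∀ l₁ ∈ S, ∀ l₂ ∈ S, l₁ < l₂ → (∀ l ∈ S, l ≤ l₁ ∨ l₂ ≤ l) →
      ∀ s t : ℝ, (l₁:ℝ) ≤ s → s ≤ t → t ≤ (l₂:ℝ) →
      ((t - s)/theta - C ≤ Phi t - Phi s ∧ Phi t - Phi s ≤ theta*(t-s) + C) := by
    intro l₁ hl₁ l₂ hl₂ hlt hgapc s t hs hst ht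
    have hltR : (l₁:ℝ) < (l₂:ℝ) := by exact_mod_cast hlt
    have hD : (0:ℝ) < (l₂:ℝ) - l₁ := by linarith
    have hPhiVal : ∀ u : ℝ, (l₁:ℝ) ≤ u → u ≤ (l₂:ℝ) →
        Phi u = (phi l₁ : ℝ) + ((u - l₁)/((l₂:ℝ) - l₁)) * ((phi l₂:ℝ) - phi l₁) := by
      intro u h1 h2
      have hμ : (u - (l₁:ℝ))/((l₂:ℝ) - l₁) ∈ Set.Icc (0:ℝ) 1 :=
        ⟨div_nonneg (by linarith) hD.le, by rw [div_le_one hD]; linarith⟩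
      have hval := hGap l₁ hl₁ l₂ hl₂ hlt hgapc _ hμ
      rw [show (1 - (u - (l₁:ℝ))/((l₂:ℝ) - l₁)) * (l₁:ℝ) +
          ((u - (l₁:ℝ))/((l₂:ℝ) - l₁)) * (l₂:ℝ) = u by field_simp; ring] at hval
      rw [hval]; ring
    have hPT : Phi t - Phi s = ((t-s)/((l₂:ℝ) - l₁)) * ((phi l₂:ℝ) - phi l₁) := by
      rw [hPhiVal s hs (hst.trans ht), hPhiVal t (hs.trans hst) ht]
      field_simp
      ring
    obtain ⟨hlo, hhi⟩ := hphi l₁ hl₁ l₂ hl₂ hlt.le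
    have hm0 : 0 ≤ (t-s)/((l₂:ℝ) - l₁) := div_nonneg (by linarith) hD.le
    have hm1 : (t-s)/((l₂:ℝ) - l₁) ≤ 1 := by rw [div_le_one hD]; linarith
    have hmD : ((t-s)/((l₂:ℝ) - l₁))*((l₂:ℝ) - l₁) = t - s := div_mul_cancel₀ _ hD.ne'
    have hmC : ((t-s)/((l₂:ℝ) - l₁))*C ≤ C := mul_le_of_le_one_left hC hm1
    constructor
    · rw [hPT]
      have h1 : ((t-s)/((l₂:ℝ) - l₁))*(((l₂:ℝ) - l₁)/theta - C) ≤
          ((t-s)/((l₂:ℝ) - l₁))*((phi l₂:ℝ) - phi l₁) := mul_le_mul_of_nonneg_left hlo hm0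
      have e1 : ((t-s)/((l₂:ℝ) - l₁))*(((l₂:ℝ) - l₁)/theta - C) =
          (((t-s)/((l₂:ℝ) - l₁))*((l₂:ℝ) - l₁))/theta - ((t-s)/((l₂:ℝ) - l₁))*C := by ring
      rw [e1, hmD] at h1
      linarith
    · rw [hPT]
      have h1 : ((t-s)/((l₂:ℝ) - l₁))*((phi l₂:ℝ) - phi l₁) ≤
          ((t-s)/((l₂:ℝ) - l₁))*(theta*((l₂:ℝ) - l₁) + C) := mul_le_mul_of_nonneg_left hhi hm0
      have e1 : ((t-s)/((l₂:ℝ) - l₁))*(theta*((l₂:ℝ) - l₁) + C) =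
          theta*(((t-s)/((l₂:ℝ) - l₁))*((l₂:ℝ) - l₁)) + ((t-s)/((l₂:ℝ) - l₁))*C := by ring
      rw [e1, hmD] at h1
      linarith
  have Bss : ∀ l₁ ∈ S, ∀ l₂ ∈ S, l₁ ≤ l₂ →
      (((l₂:ℝ) - l₁)/theta - C ≤ Phi l₂ - Phi l₁ ∧ Phi l₂ - Phi l₁ ≤ theta*((l₂:ℝ)-l₁) + C) := by
    intro l₁ hl₁ l₂ hl₂ hle
    obtain ⟨h1, h2⟩ := hphi l₁ hl₁ l₂ hl₂ hle
    rw [hOn l₁ hl₁, hOn l₂ hl₂]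
    exact ⟨h1, h2⟩
  have Babove : ∀ M ∈ S, (∀ l ∈ S, l ≤ M) → ∀ s t : ℝ, (M:ℝ) ≤ s → s ≤ t →
      ((t - s)/theta - 0 ≤ Phi t - Phi s ∧ Phi t - Phi s ≤ theta*(t-s) + 0) := by
    intro M hM hMmax s t hMs hst
    rw [hAbove M hM hMmax s hMs, hAbove M hM hMmax t (hMs.trans hst)]
    constructor
    · have : (t-s)/theta ≤ t-s := div_le_self (by linarith) htheta
      linarith
    · nlinarith [mul_nonneg (sub_nonneg.2 htheta) (sub_nonneg.2 hst)]
  have Bbelow : ∀ m ∈ S, (∀ l ∈ S, m ≤ l) → ∀ s t : ℝ, s ≤ t → t ≤ (m:ℝ) →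
      ((t - s)/theta - 0 ≤ Phi t - Phi s ∧ Phi t - Phi s ≤ theta*(t-s) + 0) := by
    intro m hm hmmin s t hst htm
    rw [hBelow m hm hmmin s (hst.trans htm), hBelow m hm hmmin t htm]
    constructor
    · have : (t-s)/theta ≤ t-s := div_le_self (by linarith) htheta
      linarith
    · nlinarith [mul_nonneg (sub_nonneg.2 htheta) (sub_nonneg.2 hst)]
  -- anchored estimates
  have Bup : ∀ u : ℝ, (∃ l ∈ S, (l:ℝ) ≤ u) →
      ∃ a, a ∈ S ∧ (a:ℝ) ≤ u ∧ (∀ l ∈ S, (l:ℝ) ≤ u → l ≤ a) ∧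
        ((u - a)/theta - C ≤ Phi u - Phi a ∧ Phi u - Phi a ≤ theta*(u-(a:ℝ)) + C) := by
    intro u hex
    obtain ⟨a, ⟨haS, hau⟩, hamax⟩ := Int.exists_greatest_of_bdd
      (P := fun z : ℤ => z ∈ S ∧ (z:ℝ) ≤ u)
      ⟨⌊u⌋, fun z hz => Int.le_floor.2 hz.2⟩
      (by obtain ⟨l, hl, hlu⟩ := hex; exact ⟨l, hl, hlu⟩)
    refine ⟨a, haS, hau, fun l hl hlu => hamax l ⟨hl, hlu⟩, ?_⟩
    rcases eq_or_lt_of_le hau with hau' | hau'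
    · rw [← hau']
      exact Btriv _ _ hC
    · by_cases hex2 : ∃ l ∈ S, u ≤ (l:ℝ)
      · obtain ⟨b, ⟨hbS, hub⟩, hbmin⟩ := Int.exists_least_of_bdd
          (P := fun z : ℤ => z ∈ S ∧ u ≤ (z:ℝ))
          ⟨⌈u⌉, fun z hz => Int.ceil_le.2 hz.2⟩
          (by obtain ⟨l, hl, hlu⟩ := hex2; exact ⟨l, hl, hlu⟩)
        have hab : a < b := by
          have : (a:ℝ) < (b:ℝ) := lt_of_lt_of_le hau' hub
          exact_mod_cast this
        have hgapc : ∀ l ∈ S, l ≤ a ∨ b ≤ l := by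
          intro l hl
          rcases le_total (l:ℝ) u with h | h
          · exact Or.inl (hamax l ⟨hl, h⟩)
          · exact Or.inr (hbmin l ⟨hl, h⟩)
        exact Bgap a haS b hbS hab hgapc (a:ℝ) u le_rfl hau hub
      · push_neg at hex2
        obtain ⟨M, hMS, hMmax⟩ := Int.exists_greatest_of_bdd (P := (· ∈ S))
          ⟨⌈u⌉, fun z hz => by
            have h1 : (z:ℝ) < u := hex2 z hz
            have h2 : (z:ℝ) ≤ (⌈u⌉:ℝ) := le_trans h1.le (Int.le_ceil u)
            exact_mod_cast h2⟩ hS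
        have hMu : (M:ℝ) ≤ u := (hex2 M hMS).le
        have haM : a ≤ M := hMmax a haS
        have h1 := Bss a haS M hMS haM
        have h2 := Babove M hMS hMmax (M:ℝ) u le_rfl hMu
        have h3 := Bcomp _ _ _ _ _ h1 h2
        exact Bmono _ _ _ _ (by linarith) h3
  have Bdown : ∀ u : ℝ, (∃ l ∈ S, u ≤ (l:ℝ)) →
      ∃ b, b ∈ S ∧ u ≤ (b:ℝ) ∧ (∀ l ∈ S, u ≤ (l:ℝ) → b ≤ l) ∧
        (((b:ℝ) - u)/theta - C ≤ Phi b - Phi u ∧ Phi b - Phi u ≤ theta*((b:ℝ)-u) + C) := by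
    intro u hex
    obtain ⟨b, ⟨hbS, hub⟩, hbmin⟩ := Int.exists_least_of_bdd
      (P := fun z : ℤ => z ∈ S ∧ u ≤ (z:ℝ))
      ⟨⌈u⌉, fun z hz => Int.ceil_le.2 hz.2⟩
      (by obtain ⟨l, hl, hlu⟩ := hex; exact ⟨l, hl, hlu⟩)
    refine ⟨b, hbS, hub, fun l hl hlu => hbmin l ⟨hl, hlu⟩, ?_⟩
    rcases eq_or_lt_of_le hub with hub' | hub'
    · rw [hub']
      exact Btriv _ _ hC
    · by_cases hex2 : ∃ l ∈ S, (l:ℝ) ≤ u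
      · obtain ⟨a, ⟨haS, hau⟩, hamax⟩ := Int.exists_greatest_of_bdd
          (P := fun z : ℤ => z ∈ S ∧ (z:ℝ) ≤ u)
          ⟨⌊u⌋, fun z hz => Int.le_floor.2 hz.2⟩
          (by obtain ⟨l, hl, hlu⟩ := hex2; exact ⟨l, hl, hlu⟩)
        have hab : a < b := by
          have : (a:ℝ) < (b:ℝ) := lt_of_le_of_lt hau hub'
          exact_mod_cast this
        have hgapc : ∀ l ∈ S, l ≤ a ∨ b ≤ l := by
          intro l hl
          rcases le_total (l:ℝ) u with h | h
          · exact Or.inl (hamax l ⟨hl, h⟩)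
          · exact Or.inr (hbmin l ⟨hl, h⟩)
        exact Bgap a haS b hbS hab hgapc u (b:ℝ) hau hub'.le le_rfl
      · push_neg at hex2
        obtain ⟨m, hmS, hmmin⟩ := Int.exists_least_of_bdd (P := (· ∈ S))
          ⟨⌊u⌋, fun z hz => by
            have h1 : u < (z:ℝ) := hex2 z hz
            have h2 : (⌊u⌋:ℝ) < (z:ℝ) := lt_of_le_of_lt (Int.floor_le u) h1
            exact_mod_cast h2.le⟩ hS
        have hum : u ≤ (m:ℝ) := (hex2 m hmS).le
        have hmb : m ≤ b := hmmin b hbS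
        have h1 := Bbelow m hmS hmmin u (m:ℝ) hum le_rfl
        have h2 := Bss m hmS b hbS hmb
        have h3 := Bcomp _ _ _ _ _ h1 h2
        exact Bmono _ _ _ _ (by linarith) h3
  -- main argument
  intro s t hst
  by_cases hQ : ∃ l ∈ S, s ≤ (l:ℝ) ∧ (l:ℝ) ≤ t
  · obtain ⟨l₀, hl₀S, hsl₀, hl₀t⟩ := hQ
    obtain ⟨b, hbS, hsb, hbmin, hBb⟩ := Bdown s ⟨l₀, hl₀S, hsl₀⟩
    have hbl₀ : b ≤ l₀ := hbmin l₀ hl₀S hsl₀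
    obtain ⟨a, haS, hat, hamax, hBa⟩ := Bup t ⟨l₀, hl₀S, hl₀t⟩
    have hl₀a : l₀ ≤ a := hamax l₀ hl₀S hl₀t
    have h1 := Bss b hbS a haS (hbl₀.trans hl₀a)
    have h2 := Bcomp _ _ _ _ _ hBb h1
    have h3 := Bcomp _ _ _ _ _ h2 hBa
    exact Bmono _ _ _ _ (by linarith) h3
  · by_cases h₁ : ∃ l ∈ S, (l:ℝ) ≤ s
    · by_cases h₂ : ∃ l ∈ S, t ≤ (l:ℝ)
      · obtain ⟨a, ⟨haS, has⟩, hamax⟩ := Int.exists_greatest_of_bdd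
          (P := fun z : ℤ => z ∈ S ∧ (z:ℝ) ≤ s)
          ⟨⌊s⌋, fun z hz => Int.le_floor.2 hz.2⟩
          (by obtain ⟨l, hl, hlu⟩ := h₁; exact ⟨l, hl, hlu⟩)
        obtain ⟨b, ⟨hbS, htb⟩, hbmin⟩ := Int.exists_least_of_bdd
          (P := fun z : ℤ => z ∈ S ∧ t ≤ (z:ℝ))
          ⟨⌈t⌉, fun z hz => Int.ceil_le.2 hz.2⟩
          (by obtain ⟨l, hl, hlu⟩ := h₂; exact ⟨l, hl, hlu⟩)
        have hab : a < b := by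
          rcases lt_or_ge a b with h | h
          · exact h
          · exfalso
            have hba : (b:ℝ) ≤ (a:ℝ) := by exact_mod_cast h
            exact hQ ⟨a, haS, by linarith, by linarith⟩
        have hgapc : ∀ l ∈ S, l ≤ a ∨ b ≤ l := by
          intro l hl
          rcases le_total (l:ℝ) s with h | h
          · exact Or.inl (hamax l ⟨hl, h⟩)
          · rcases le_total (l:ℝ) t with h' | h'
            · exact absurd ⟨l, hl, h, h'⟩ hQ
            · exact Or.inr (hbmin l ⟨hl, h'⟩)
        have := Bgap a haS b hbS hab hgapc s t has hst htb
        exact Bmono _ _ _ _ (by linarith) this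
      · push_neg at h₂
        obtain ⟨M, hMS, hMmax⟩ := Int.exists_greatest_of_bdd (P := (· ∈ S))
          ⟨⌈t⌉, fun z hz => by
            have h1 : (z:ℝ) < t := h₂ z hz
            have h2 : (z:ℝ) ≤ (⌈t⌉:ℝ) := le_trans h1.le (Int.le_ceil t)
            exact_mod_cast h2⟩ hS
        have hMs : (M:ℝ) ≤ s := by
          by_contra h
          push_neg at h
          exact hQ ⟨M, hMS, h.le, (h₂ M hMS).le⟩
        have := Babove M hMS hMmax s t hMs hst
        exact Bmono _ _ _ _ (by linarith) this
    · push_neg at h₁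
      obtain ⟨m, hmS, hmmin⟩ := Int.exists_least_of_bdd (P := (· ∈ S))
        ⟨⌊s⌋, fun z hz => by
          have h1 : s < (z:ℝ) := h₁ z hz
          have h2 : (⌊s⌋:ℝ) ≤ (z:ℝ) := le_trans (Int.floor_le s) h1.le
          exact_mod_cast h2⟩ hS
      have hmt : t ≤ (m:ℝ) := by
        by_contra h
        push_neg at h
        exact hQ ⟨m, hmS, (h₁ m hmS).le, h.le⟩
      have := Bbelow m hmS hmmin s t hst hmt
      exact Bmono _ _ _ _ (by linarith) this

end Stmt16Aux

/-- `f_x(x,t) = (f(x), 2^{−Φ_x(log₂(1/t))})` is a (θ,k)-rough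
quasi-isometry from the ray `{x}×(0,∞)` onto `{f(x)}×(0,∞)`, `k = k(θ,λ)`. -/
theorem stmt16 (theta lam : ℝ) (htheta : 1 ≤ theta) (hlam : 1 ≤ lam) :
    ∃ k : ℝ, 0 ≤ k ∧
      ∀ (Z : Type u) (W : Type v) [MetricSpace Z] [MetricSpace W],
        AtLeastThree Z → AtLeastThree W →
        ∀ (f : Z ≃ₜ W), IsPQS theta lam f →
        ∀ (x : Z) (Phi : ℝ → ℝ),
          IsLinearExtension (scaleSpectrum x) (phiMap f x) Phi →
          ∀ t₁ t₂ : ℝ, 0 < t₁ → 0 < t₂ →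
            (1/theta) * rhoH (x, t₁) (x, t₂) - k ≤
                rhoH (f x, (2:ℝ) ^ (-(Phi (Real.logb 2 (1/t₁)))))
                  (f x, (2:ℝ) ^ (-(Phi (Real.logb 2 (1/t₂))))) ∧
              rhoH (f x, (2:ℝ) ^ (-(Phi (Real.logb 2 (1/t₁)))))
                  (f x, (2:ℝ) ^ (-(Phi (Real.logb 2 (1/t₂))))) ≤
                theta * rhoH (x, t₁) (x, t₂) + k := by
  classical
  obtain ⟨C, hCdef⟩ : ∃ C : ℝ, C = theta + 1/theta + Real.logb 2 lam + 2 := ⟨_, rfl⟩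
  have hθ0 : (0:ℝ) < theta := by linarith
  have hL0 : 0 ≤ Real.logb 2 lam := Real.logb_nonneg one_lt_two hlam
  have hC0 : 0 ≤ C := by
    have h1θ : 0 < 1/theta := by positivity
    rw [hCdef]
    linarith
  have hlog2 : (0:ℝ) < Real.log 2 := Real.log_pos one_lt_two
  refine ⟨Real.log 2 * (4*C), by positivity, ?_⟩
  intro Z W _ _ hZ3 _ f hf x Phi hPhi t₁ t₂ ht₁ ht₂
  obtain ⟨a, b, c, hab, hac, hbc⟩ := hZ3
  have hzex : ∃ z : Z, z ≠ x := by
    by_cases h : a = x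
    · exact ⟨b, fun e => hab (h.trans e.symm)⟩
    · exact ⟨a, h⟩
  obtain ⟨z, hz⟩ := hzex
  have hS : (scaleSpectrum x).Nonempty :=
    ⟨⌊-Real.logb 2 (dist z x)⌋, z, Stmt16Aux.mem_annulus_floor (dist_pos.2 hz)⟩
  have hphi : ∀ l₁ ∈ scaleSpectrum x, ∀ l₂ ∈ scaleSpectrum x, l₁ ≤ l₂ →
      ((l₂:ℝ) - l₁)/theta - C ≤ (phiMap f x l₂ : ℝ) - phiMap f x l₁ ∧
      (phiMap f x l₂:ℝ) - phiMap f x l₁ ≤ theta * ((l₂:ℝ) - l₁) + C := by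
    intro l₁ h₁ l₂ h₂ hle
    rw [hCdef]
    exact Stmt16Aux.phi_diff_bounds htheta hlam f.injective hf h₁ h₂ hle
  have key := Stmt16Aux.Phi_global htheta hC0 hS hphi hPhi
  set u₁ := Real.logb 2 (1/t₁) with hu₁
  set u₂ := Real.logb 2 (1/t₂) with hu₂
  have hulog : ∀ t : ℝ, 0 < t → Real.log t = -(Real.logb 2 (1/t) * Real.log 2) := by
    intro t ht
    rw [one_div, Real.logb_inv, neg_mul, neg_neg, ← Real.log_div_log,
      div_mul_cancel₀ _ hlog2.ne']
  have e₁ : rhoH (x, t₁) (x, t₂) = Real.log 2 * |u₁ - u₂| := by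
    rw [Stmt16Aux.rhoH_self x ht₁ ht₂, hulog t₁ ht₁, hulog t₂ ht₂, ← hu₁, ← hu₂]
    rw [show -(u₁ * Real.log 2) - -(u₂ * Real.log 2) = Real.log 2 * (u₂ - u₁) by ring,
      abs_mul, abs_of_nonneg hlog2.le, abs_sub_comm]
  have e₂ : rhoH (f x, (2:ℝ) ^ (-(Phi u₁))) (f x, (2:ℝ) ^ (-(Phi u₂)))
      = Real.log 2 * |Phi u₁ - Phi u₂| := by
    rw [Stmt16Aux.rhoH_self (f x) (Real.rpow_pos_of_pos two_pos _)
      (Real.rpow_pos_of_pos two_pos _), Real.log_rpow two_pos, Real.log_rpow two_pos]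
    rw [show -Phi u₁ * Real.log 2 - -Phi u₂ * Real.log 2 = Real.log 2 * (Phi u₂ - Phi u₁) by ring,
      abs_mul, abs_of_nonneg hlog2.le, abs_sub_comm]
  rw [e₁, e₂]
  have main : ∀ v₁ v₂ : ℝ, v₁ ≤ v₂ →
      (1/theta) * (Real.log 2 * |v₁ - v₂|) - Real.log 2 * (4*C) ≤
        Real.log 2 * |Phi v₁ - Phi v₂| ∧
      Real.log 2 * |Phi v₁ - Phi v₂| ≤ theta * (Real.log 2 * |v₁ - v₂|) + Real.log 2 * (4*C) := by
    intro v₁ v₂ h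
    obtain ⟨hl, hr⟩ := key v₁ v₂ h
    have habs1 : |v₁ - v₂| = v₂ - v₁ := by rw [abs_sub_comm]; exact abs_of_nonneg (by linarith)
    have habs2 : Phi v₂ - Phi v₁ ≤ |Phi v₁ - Phi v₂| := by rw [abs_sub_comm]; exact le_abs_self _
    have hnn : 0 ≤ (v₂ - v₁)/theta := div_nonneg (by linarith) hθ0.le
    have hnn2 : 0 ≤ theta * (v₂ - v₁) := mul_nonneg hθ0.le (by linarith)
    have habs3 : |Phi v₁ - Phi v₂| ≤ theta*(v₂-v₁) + 4*C := by
      rw [abs_sub_comm, abs_le]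
      exact ⟨by linarith, by linarith⟩
    constructor
    · rw [habs1]
      have h3 := mul_le_mul_of_nonneg_left habs2 hlog2.le
      have h4 := mul_le_mul_of_nonneg_left hl hlog2.le
      have e : (1/theta) * (Real.log 2 * (v₂ - v₁)) - Real.log 2 * (4*C)
          = Real.log 2 * ((v₂-v₁)/theta - 4*C) := by ring
      rw [e]
      linarith
    · rw [habs1]
      have h3 := mul_le_mul_of_nonneg_left habs3 hlog2.le
      have e : theta * (Real.log 2 * (v₂ - v₁)) + Real.log 2 * (4*C)
          = Real.log 2 * (theta*(v₂-v₁) + 4*C) := by ring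
      rw [e]
      linarith
  rcases le_total u₁ u₂ with h | h
  · exact main u₁ u₂ h
  · have hm := main u₂ u₁ h
    rwa [abs_sub_comm u₂ u₁, abs_sub_comm (Phi u₂) (Phi u₁)] at hm
end
end

section
/- With f_x(x,t) = (f(x), 2^{−Φ_x(log₂(1/t))}), for distinct x, y ∈ Z and any t ≥ d_Z(x,y), one has ρ_h(f_x(x,t), f_y(y,t)) ≤ C(θ,λ) for a constant depending only on θ and λ. -/
noncomputable section

universe u v

namespace Stmt18
open Real

lemma two_zpow_eq (n : ℤ) : (2:ℝ) ^ n = (2:ℝ) ^ (n:ℝ) := (Real.rpow_intCast 2 n).symm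
lemma rpow2_pos (r : ℝ) : 0 < (2:ℝ)^r := Real.rpow_pos_of_pos two_pos r
lemma le_rpow_iff' {d r : ℝ} (hd : 0 < d) : d ≤ 2^r ↔ Real.logb 2 d ≤ r :=
  (Real.logb_le_iff_le_rpow one_lt_two hd).symm
lemma rpow_lt_iff {d r : ℝ} (hd : 0 < d) : (2:ℝ)^r < d ↔ r < Real.logb 2 d :=
  (Real.lt_logb_iff_rpow_lt one_lt_two hd).symm
lemma rpow_le_iff {d r : ℝ} (hd : 0 < d) : (2:ℝ)^r ≤ d ↔ r ≤ Real.logb 2 d :=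
  (Real.le_logb_iff_rpow_le one_lt_two hd).symm
lemma lt_rpow_iff {d r : ℝ} (hd : 0 < d) : d < 2^r ↔ Real.logb 2 d < r :=
  Real.logb_lt_iff_lt_rpow one_lt_two hd |>.symm

/-- annulus membership in log form -/
lemma mem_ann_iff {Z : Type u} [MetricSpace Z] {z x : Z} (h : z ≠ x) (l : ℤ) :
    z ∈ dyadicAnnulus x l ↔
      ((-(l:ℝ) - 1) < Real.logb 2 (dist z x) ∧ Real.logb 2 (dist z x) ≤ (-(l:ℝ))) := by
  have hd : 0 < dist z x := dist_pos.2 h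
  unfold dyadicAnnulus
  rw [Set.mem_setOf_eq, two_zpow_eq, two_zpow_eq, rpow_lt_iff hd, (le_rpow_iff' hd)]
  push_cast
  constructor <;> (rintro ⟨a, b⟩; constructor <;> linarith)

lemma mem_ann_floor {Z : Type u} [MetricSpace Z] {z x : Z} (h : z ≠ x) :
    z ∈ dyadicAnnulus x ⌊-(Real.logb 2 (dist z x))⌋ := by
  set k := ⌊-(Real.logb 2 (dist z x))⌋ with hk
  have h1 : (k:ℝ) ≤ -(Real.logb 2 (dist z x)) := Int.floor_le _
  have h2 : -(Real.logb 2 (dist z x)) < k + 1 := Int.lt_floor_add_one _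
  rw [mem_ann_iff h]
  constructor <;> linarith

lemma mem_spectrum {Z : Type u} [MetricSpace Z] {z x : Z} (h : z ≠ x) :
    ⌊-(Real.logb 2 (dist z x))⌋ ∈ scaleSpectrum x := ⟨z, mem_ann_floor h⟩



section QS
variable {Z : Type u} {W : Type v} [MetricSpace Z] [MetricSpace W]
variable {theta lam : ℝ} {f : Z ≃ₜ W}

lemma dist_f_pos (f : Z ≃ₜ W) {u v : Z} (h : u ≠ v) : 0 < dist (f u) (f v) :=
  dist_pos.2 (fun e => h (f.injective e))

lemma logqs (htheta : 1 ≤ theta) (hlam : 1 ≤ lam) (hf : IsPQS theta lam ⇑f)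
    {u v z : Z} (hu : u ≠ z) (hv : v ≠ z) {r : ℝ}
    (h : Real.logb 2 (dist u z) ≤ r + Real.logb 2 (dist v z)) :
    (0 ≤ r → Real.logb 2 (dist (f u) (f z)) ≤
        Real.logb 2 (dist (f v) (f z)) + Real.logb 2 lam + theta * r)
    ∧ (r ≤ 0 → Real.logb 2 (dist (f u) (f z)) ≤
        Real.logb 2 (dist (f v) (f z)) + Real.logb 2 lam + r / theta) := by
  have htheta0 : 0 < theta := lt_of_lt_of_le one_pos htheta
  have hlam0 : 0 < lam := lt_of_lt_of_le one_pos hlam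
  have hduz : 0 < dist u z := dist_pos.2 hu
  have hdvz : 0 < dist v z := dist_pos.2 hv
  have hfu : 0 < dist (f u) (f z) := dist_f_pos f hu
  have hfv : 0 < dist (f v) (f z) := dist_f_pos f hv
  set q : ℝ := dist u z / dist v z with hqdef
  have hq0 : 0 < q := div_pos hduz hdvz
  have hq : q ≤ 2 ^ r := by
    rw [div_le_iff₀ hdvz]
    have : dist u z ≤ 2 ^ (r + Real.logb 2 (dist v z)) := (le_rpow_iff' hduz).2 h
    rwa [Real.rpow_add two_pos, Real.rpow_logb two_pos (by norm_num) hdvz] at this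
  have key : dist (f u) (f z) ≤ etaPQS theta lam q * dist (f v) (f z) := by
    have := hf u v z hv
    rw [div_le_iff₀ hfv] at this
    exact this
  -- helper
  have main : ∀ s : ℝ, etaPQS theta lam q ≤ lam * 2 ^ s →
      Real.logb 2 (dist (f u) (f z)) ≤
        Real.logb 2 (dist (f v) (f z)) + Real.logb 2 lam + s := by
    intro s hs
    have h2 : dist (f u) (f z) ≤ lam * 2 ^ s * dist (f v) (f z) :=
      le_trans key (by
        apply mul_le_mul_of_nonneg_right hs (le_of_lt hfv))
    have hrhs : (0:ℝ) < lam * 2 ^ s * dist (f v) (f z) := by positivity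
    have := (Real.logb_le_logb one_lt_two hfu hrhs).2 h2
    calc Real.logb 2 (dist (f u) (f z)) ≤ Real.logb 2 (lam * 2 ^ s * dist (f v) (f z)) := this
      _ = Real.logb 2 lam + s + Real.logb 2 (dist (f v) (f z)) := by
          rw [Real.logb_mul (by positivity) (ne_of_gt hfv),
              Real.logb_mul (ne_of_gt hlam0) (ne_of_gt (rpow2_pos s)),
              Real.logb_rpow two_pos (by norm_num)]
      _ = Real.logb 2 (dist (f v) (f z)) + Real.logb 2 lam + s := by ring
  constructor
  · intro hr
    apply main
    unfold etaPQS
    by_cases hq1 : q < 1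
    · rw [if_pos hq1]
      have h1 : q ^ (1/theta) ≤ 1 :=
        Real.rpow_le_one (le_of_lt hq0) (le_of_lt hq1) (by positivity)
      have h2 : (1:ℝ) ≤ 2 ^ (theta * r) := by
        have : (2:ℝ)^(0:ℝ) ≤ 2 ^ (theta * r) :=
          (Real.rpow_le_rpow_left_iff one_lt_two).2 (by positivity)
        simpa using this
      nlinarith [Real.rpow_nonneg (le_of_lt hq0) (1/theta)]
    · rw [if_neg hq1]
      have h1 : q ^ theta ≤ (2^r) ^ theta :=
        Real.rpow_le_rpow (le_of_lt hq0) hq (le_of_lt htheta0)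
      have h2 : ((2:ℝ)^r) ^ theta = 2 ^ (theta * r) := by
        rw [← Real.rpow_mul (by norm_num), mul_comm]
      rw [h2] at h1
      nlinarith
  · intro hr
    apply main
    unfold etaPQS
    have hbr : (2:ℝ) ^ (theta * r) ≤ 2 ^ (r / theta) := by
      apply (Real.rpow_le_rpow_left_iff one_lt_two).2
      rw [le_div_iff₀ htheta0]
      have h1 : (1:ℝ) ≤ theta * theta := by nlinarith
      have h2 : r * (theta * theta) ≤ r * 1 := mul_le_mul_of_nonpos_left h1 hr
      nlinarith
    by_cases hq1 : q < 1
    · rw [if_pos hq1]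
      have h1 : q ^ (1/theta) ≤ (2^r) ^ (1/theta) :=
        Real.rpow_le_rpow (le_of_lt hq0) hq (by positivity)
      have h2 : ((2:ℝ)^r) ^ (1/theta) = 2 ^ (r / theta) := by
        rw [← Real.rpow_mul (by norm_num)]
        ring_nf
      rw [h2] at h1
      nlinarith
    · rw [if_neg hq1]
      have h1 : q ^ theta ≤ (2^r) ^ theta :=
        Real.rpow_le_rpow (le_of_lt hq0) hq (le_of_lt htheta0)
      have h2 : ((2:ℝ)^r) ^ theta = 2 ^ (theta * r) := by
        rw [← Real.rpow_mul (by norm_num), mul_comm]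
      rw [h2] at h1
      have := hbr
      nlinarith
end QS

/-- the defining set of `phiMap` -/
def TS {Z : Type u} {W : Type v} [MetricSpace Z] [MetricSpace W]
    (f : Z → W) (x : Z) (l : ℤ) : Set ℤ :=
  {l' | ∃ w : Z, (2:ℝ) ^ (-l-1) < dist w x ∧ f w ∈ dyadicAnnulus (f x) l'}

lemma phiMap_eq {Z : Type u} {W : Type v} [MetricSpace Z] [MetricSpace W]
    (f : Z → W) (x : Z) (l : ℤ) : phiMap f x l = sSup (TS f x l) := rfl

lemma two_zpow_pos (n : ℤ) : (0:ℝ) < (2:ℝ)^n := by positivity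

lemma zpow_lt_dist {d : ℝ} (hd : 0 < d) {n : ℤ} : (2:ℝ)^n < d ↔ ((n:ℝ) < Real.logb 2 d) := by
  rw [two_zpow_eq]; exact rpow_lt_iff hd

lemma dist_le_zpow {d : ℝ} (hd : 0 < d) {n : ℤ} : d ≤ (2:ℝ)^n ↔ (Real.logb 2 d ≤ (n:ℝ)) := by
  rw [two_zpow_eq]; exact le_rpow_iff' hd

section TSl
variable {Z : Type u} {W : Type v} [MetricSpace Z] [MetricSpace W]
variable {theta lam : ℝ} {f : Z ≃ₜ W}

lemma ts_elt_le_gen (htheta : 1 ≤ theta) (hlam : 1 ≤ lam) (hf : IsPQS theta lam ⇑f)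
    {x z : Z} (hz : z ≠ x) {l l' : ℤ} (hl' : l' ∈ TS ⇑f x l) {r : ℝ}
    (hr : Real.logb 2 (dist z x) + l + 1 ≤ r) :
    (0 ≤ r → (l' : ℝ) ≤ -(Real.logb 2 (dist (f z) (f x))) + Real.logb 2 lam + theta * r) ∧
    (r ≤ 0 → (l' : ℝ) ≤ -(Real.logb 2 (dist (f z) (f x))) + Real.logb 2 lam + r / theta) := by
  obtain ⟨w, hw1, hw2⟩ := hl'
  have hwx : w ≠ x := by
    intro e; subst e
    simp only [dist_self] at hw1
    exact absurd hw1 (not_lt.2 (le_of_lt (two_zpow_pos _)))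
  have hdw : 0 < dist w x := dist_pos.2 hwx
  have hw1' : -(l:ℝ) - 1 < Real.logb 2 (dist w x) := by
    have := (zpow_lt_dist hdw).1 hw1
    push_cast at this; linarith
  have hfwx : f w ≠ f x := fun e => hwx (f.injective e)
  have hann := (mem_ann_iff hfwx l').1 hw2
  have hlog := logqs htheta hlam hf hz hwx (r := r) (by linarith)
  constructor
  · intro h0
    have := hlog.1 h0
    linarith [hann.2]
  · intro h0
    have := hlog.2 h0
    linarith [hann.2]

lemma ts_bdd (htheta : 1 ≤ theta) (hlam : 1 ≤ lam) (hf : IsPQS theta lam ⇑f)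
    {x z : Z} (hz : z ≠ x) (l : ℤ) : BddAbove (TS ⇑f x l) := by
  refine ⟨⌊-(Real.logb 2 (dist (f z) (f x))) + Real.logb 2 lam
      + theta * max (Real.logb 2 (dist z x) + l + 1) 0⌋, fun l' h => Int.le_floor.2 ?_⟩
  exact (ts_elt_le_gen htheta hlam hf hz h (le_max_left _ _)).1 (le_max_right _ _)

lemma ts_nonempty {x w : Z} (hwx : w ≠ x) {l : ℤ} (hw : (2:ℝ)^(-l-1) < dist w x) :
    (TS ⇑f x l).Nonempty := by
  refine ⟨⌊-(Real.logb 2 (dist (f w) (f x)))⌋, w, hw, ?_⟩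
  exact mem_ann_floor (fun e => hwx (f.injective e))

lemma phi_mem (htheta : 1 ≤ theta) (hlam : 1 ≤ lam) (hf : IsPQS theta lam ⇑f)
    {x z : Z} (hz : z ≠ x) {l : ℤ} (hne : (TS ⇑f x l).Nonempty) :
    phiMap ⇑f x l ∈ TS ⇑f x l := by
  rw [phiMap_eq]; exact Int.csSup_mem hne (ts_bdd htheta hlam hf hz l)

lemma phi_lb (htheta : 1 ≤ theta) (hlam : 1 ≤ lam) (hf : IsPQS theta lam ⇑f)
    {x z : Z} (hz : z ≠ x) {l : ℤ} {w : Z} (hwx : w ≠ x) (hw : (2:ℝ)^(-l-1) < dist w x) :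
    -(Real.logb 2 (dist (f w) (f x))) - 1 ≤ (phiMap ⇑f x l : ℝ) := by
  have hmem : ⌊-(Real.logb 2 (dist (f w) (f x)))⌋ ∈ TS ⇑f x l :=
    ⟨w, hw, mem_ann_floor (fun e => hwx (f.injective e))⟩
  have := le_csSup (ts_bdd htheta hlam hf hz l) hmem
  rw [phiMap_eq]
  have hfl : (⌊-(Real.logb 2 (dist (f w) (f x)))⌋ : ℝ) ≥ -(Real.logb 2 (dist (f w) (f x))) - 1 := by
    linarith [Int.lt_floor_add_one (-(Real.logb 2 (dist (f w) (f x))))]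
  calc -(Real.logb 2 (dist (f w) (f x))) - 1 ≤ (⌊-(Real.logb 2 (dist (f w) (f x)))⌋ : ℝ) := hfl
    _ ≤ _ := by exact_mod_cast this

lemma phi_ub_pos (htheta : 1 ≤ theta) (hlam : 1 ≤ lam) (hf : IsPQS theta lam ⇑f)
    {x z : Z} (hz : z ≠ x) {l : ℤ} (hne : (TS ⇑f x l).Nonempty) {r : ℝ}
    (hr : Real.logb 2 (dist z x) + l + 1 ≤ r) (hr0 : 0 ≤ r) :
    (phiMap ⇑f x l : ℝ) ≤ -(Real.logb 2 (dist (f z) (f x))) + Real.logb 2 lam + theta * r := by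
  have : phiMap ⇑f x l ≤ ⌊-(Real.logb 2 (dist (f z) (f x))) + Real.logb 2 lam + theta * r⌋ := by
    rw [phiMap_eq]
    exact csSup_le hne (fun l' hl' => Int.le_floor.2 ((ts_elt_le_gen htheta hlam hf hz hl' hr).1 hr0))
  calc (phiMap ⇑f x l : ℝ) ≤ (⌊-(Real.logb 2 (dist (f z) (f x))) + Real.logb 2 lam + theta * r⌋ : ℝ) := by exact_mod_cast this
    _ ≤ _ := Int.floor_le _

lemma phi_ub_neg (htheta : 1 ≤ theta) (hlam : 1 ≤ lam) (hf : IsPQS theta lam ⇑f)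
    {x z : Z} (hz : z ≠ x) {l : ℤ} (hne : (TS ⇑f x l).Nonempty) {r : ℝ}
    (hr : Real.logb 2 (dist z x) + l + 1 ≤ r) (hr0 : r ≤ 0) :
    (phiMap ⇑f x l : ℝ) ≤ -(Real.logb 2 (dist (f z) (f x))) + Real.logb 2 lam + r / theta := by
  have : phiMap ⇑f x l ≤ ⌊-(Real.logb 2 (dist (f z) (f x))) + Real.logb 2 lam + r / theta⌋ := by
    rw [phiMap_eq]
    exact csSup_le hne (fun l' hl' => Int.le_floor.2 ((ts_elt_le_gen htheta hlam hf hz hl' hr).2 hr0))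
  calc (phiMap ⇑f x l : ℝ) ≤ (⌊-(Real.logb 2 (dist (f z) (f x))) + Real.logb 2 lam + r / theta⌋ : ℝ) := by exact_mod_cast this
    _ ≤ _ := Int.floor_le _

lemma ts_mono {x : Z} {l l' : ℤ} (h : l ≤ l') : TS ⇑f x l ⊆ TS ⇑f x l' := by
  rintro k ⟨w, hw1, hw2⟩
  refine ⟨w, lt_of_le_of_lt ?_ hw1, hw2⟩
  apply zpow_le_zpow_right₀ (by norm_num : (1:ℝ) ≤ 2)
  omega

lemma phi_mono (htheta : 1 ≤ theta) (hlam : 1 ≤ lam) (hf : IsPQS theta lam ⇑f)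
    {x z : Z} (hz : z ≠ x) {l l' : ℤ} (hne : (TS ⇑f x l).Nonempty) (h : l ≤ l') :
    phiMap ⇑f x l ≤ phiMap ⇑f x l' := by
  rw [phiMap_eq, phiMap_eq]
  exact csSup_le_csSup (ts_bdd htheta hlam hf hz l') hne (ts_mono h)

lemma ts_step {x : Z} {l : ℤ} (h : (l+1) ∉ scaleSpectrum x) :
    TS ⇑f x (l+1) = TS ⇑f x l := by
  apply Set.Subset.antisymm
  · rintro k ⟨w, hw1, hw2⟩
    have hwx : w ≠ x := by
      intro e; subst e
      simp only [dist_self] at hw1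
      exact absurd hw1 (not_lt.2 (le_of_lt (two_zpow_pos _)))
    have hdw : 0 < dist w x := dist_pos.2 hwx
    set j := ⌊-(Real.logb 2 (dist w x))⌋ with hj
    have hjS : j ∈ scaleSpectrum x := mem_spectrum hwx
    have h1 : -(l:ℝ) - 2 < Real.logb 2 (dist w x) := by
      have := (zpow_lt_dist hdw).1 hw1
      push_cast at this; linarith
    have hjle : j ≤ l := by
      have hj1 : (j:ℝ) ≤ -(Real.logb 2 (dist w x)) := Int.floor_le _
      have h2 : (j:ℝ) < l + 2 := by linarith
      have h3 : j < l + 2 := by exact_mod_cast h2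
      have h4 : j ≠ l + 1 := fun e => h (e ▸ hjS)
      omega
    refine ⟨w, ?_, hw2⟩
    rw [zpow_lt_dist hdw]
    have hja := (mem_ann_iff hwx j).1 (mem_ann_floor hwx)
    push_cast
    have : -(l:ℝ) - 1 ≤ -(j:ℝ) - 1 := by
      have : (j:ℝ) ≤ l := by exact_mod_cast hjle
      linarith
    linarith [hja.1]
  · exact ts_mono (by omega)

end TSl
end Stmt18

namespace Stmt18
open Real

section Cross
variable {Z : Type u} {W : Type v} [MetricSpace Z] [MetricSpace W]
variable {theta lam : ℝ} {f : Z ≃ₜ W}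

lemma zpow_succ2 (j : ℤ) : (2:ℝ)^(-j-1) = 2^(-j-2) * 2 := by
  rw [show (-j-1:ℤ) = (-j-2)+1 by ring, zpow_add₀ (by norm_num : (2:ℝ) ≠ 0)]
  norm_num

lemma la_mem (x y : Z) (la : ℤ) (hxy : x ≠ y)
    (hla1 : (2:ℝ)^(-la-1) < dist x y) (hla2 : dist x y ≤ (2:ℝ)^(-la)) :
    la ∈ scaleSpectrum x := by
  refine ⟨y, ?_, ?_⟩ <;> rw [dist_comm] <;> assumption

lemma E2 (htheta : 1 ≤ theta) (hlam : 1 ≤ lam) (hf : IsPQS theta lam ⇑f)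
    (x y : Z) (la : ℤ) (hxy : x ≠ y)
    (hla1 : (2:ℝ)^(-la-1) < dist x y) (hla2 : dist x y ≤ (2:ℝ)^(-la)) :
    (phiMap ⇑f x la : ℝ) ≤ -(Real.logb 2 (dist (f x) (f y))) + Real.logb 2 lam + theta := by
  have hyx : y ≠ x := Ne.symm hxy
  have hd : 0 < dist y x := dist_pos.2 hyx
  have hla2' : dist y x ≤ (2:ℝ)^(-la) := by rwa [dist_comm]
  have hla1' : (2:ℝ)^(-la-1) < dist y x := by rwa [dist_comm]
  have hne : (TS ⇑f x la).Nonempty := ts_nonempty hyx hla1'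
  have hlog : Real.logb 2 (dist y x) ≤ -(la:ℝ) := by
    have := (dist_le_zpow hd).1 hla2'; push_cast at this ⊢; linarith
  have := phi_ub_pos htheta hlam hf hyx hne (r := 1) (by push_cast; linarith) (by norm_num)
  rw [dist_comm (f y) (f x)] at this
  linarith

lemma E2' (htheta : 1 ≤ theta) (hlam : 1 ≤ lam) (hf : IsPQS theta lam ⇑f)
    (x y : Z) (la : ℤ) (hxy : x ≠ y)
    (hla1 : (2:ℝ)^(-la-1) < dist x y) (hla2 : dist x y ≤ (2:ℝ)^(-la)) :
    -(Real.logb 2 (dist (f x) (f y))) - 1 ≤ (phiMap ⇑f x la : ℝ) := by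
  have hyx : y ≠ x := Ne.symm hxy
  have hla1' : (2:ℝ)^(-la-1) < dist y x := by rwa [dist_comm]
  have := phi_lb htheta hlam hf hyx hyx hla1'
  rwa [dist_comm (f y) (f x)] at this

/-- key transfer: `q(j+1) ≥ p(j) - (Λ+2)` for `j ≤ la - 2`. -/
lemma F2 (htheta : 1 ≤ theta) (hlam : 1 ≤ lam) (hf : IsPQS theta lam ⇑f)
    (x y : Z) (la : ℤ) (hxy : x ≠ y)
    (hla1 : (2:ℝ)^(-la-1) < dist x y) (hla2 : dist x y ≤ (2:ℝ)^(-la))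
    {j : ℤ} (hj : j ≤ la - 2) (hne : (TS ⇑f x j).Nonempty) :
    (phiMap ⇑f x j : ℝ) ≤ (phiMap ⇑f y (j+1) : ℝ) + (Real.logb 2 lam + 2) := by
  have hyx : y ≠ x := Ne.symm hxy
  have hlam0 : (0:ℝ) < lam := lt_of_lt_of_le one_pos hlam
  have hjr : (j:ℝ) ≤ (la:ℝ) - 2 := by exact_mod_cast hj
  obtain ⟨w, hw1, hw2⟩ := phi_mem htheta hlam hf hyx hne
  have hwx : w ≠ x := by
    intro e; subst e; simp only [dist_self] at hw1
    exact absurd hw1 (not_lt.2 (le_of_lt (two_zpow_pos _)))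
  have hdwx : 0 < dist w x := dist_pos.2 hwx
  have haj : dist x y ≤ (2:ℝ)^(-j-2) := by
    refine le_trans hla2 (zpow_le_zpow_right₀ (by norm_num) (by omega))
  -- w is far from y
  have hwy_far : (2:ℝ)^(-(j+1)-1) < dist w y := by
    have htri : dist w x ≤ dist w y + dist x y := by
      have := dist_triangle w y x
      rw [dist_comm y x] at this; linarith
    have : (2:ℝ)^(-j-1) < dist w y + (2:ℝ)^(-j-2) := by linarith
    rw [zpow_succ2 j] at this
    have h5 : (2:ℝ)^(-j-2) < dist w y := by linarith
    have e : (-(j+1)-1 : ℤ) = -j-2 := by ring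
    rw [e]; exact h5
  have hwy : w ≠ y := by
    intro e; subst e; simp only [dist_self] at hwy_far
    exact absurd hwy_far (not_lt.2 (le_of_lt (two_zpow_pos _)))
  -- image distance comparison : D ≤ lam * dist (f w) (f x)
  have hwx1 : -(j:ℝ) - 1 < Real.logb 2 (dist w x) := by
    have := (zpow_lt_dist hdwx).1 hw1; push_cast at this; linarith
  have hDle : Real.logb 2 (dist (f y) (f x)) ≤ Real.logb 2 (dist (f w) (f x)) + Real.logb 2 lam := by
    have hdyx : 0 < dist y x := dist_pos.2 hyx
    have hlogyx : Real.logb 2 (dist y x) ≤ -(la:ℝ) := by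
      have : dist y x ≤ (2:ℝ)^(-la) := by rwa [dist_comm]
      have := (dist_le_zpow hdyx).1 this; push_cast at this; linarith
    have hlog := (logqs htheta hlam hf hyx hwx (r := (j:ℝ)+1-la)
      (by push_cast; linarith)).2 (by push_cast; linarith)
    have : ((j:ℝ)+1-la)/theta ≤ 0 := by
      apply div_nonpos_of_nonpos_of_nonneg (by push_cast; linarith)
      linarith
    linarith
  -- dist (f w) (f y) ≤ 2 * lam * dist (f w) (f x)
  have hfwx : 0 < dist (f w) (f x) := dist_f_pos f hwx
  have hfwy : 0 < dist (f w) (f y) := dist_f_pos f hwy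
  have hDd : dist (f y) (f x) ≤ lam * dist (f w) (f x) := by
    have h2 : dist (f y) (f x) ≤ 2 ^ (Real.logb 2 (dist (f w) (f x)) + Real.logb 2 lam) :=
      (le_rpow_iff' (dist_f_pos f hyx)).2 hDle
    rwa [Real.rpow_add two_pos, Real.rpow_logb two_pos (by norm_num) hfwx,
      Real.rpow_logb two_pos (by norm_num) hlam0, mul_comm] at h2
  have himg : dist (f w) (f y) ≤ 2 * lam * dist (f w) (f x) := by
    have := dist_triangle (f w) (f x) (f y)
    have hd2 : dist (f x) (f y) ≤ lam * dist (f w) (f x) := by rwa [dist_comm (f y) (f x)] at hDd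
    nlinarith
  have hlogimg : Real.logb 2 (dist (f w) (f y)) ≤
      Real.logb 2 (dist (f w) (f x)) + Real.logb 2 lam + 1 := by
    have h1 : Real.logb 2 (dist (f w) (f y)) ≤ Real.logb 2 (2 * lam * dist (f w) (f x)) :=
      (Real.logb_le_logb one_lt_two hfwy (by positivity)).2 himg
    have h2 : Real.logb 2 (2 * lam * dist (f w) (f x)) =
        1 + Real.logb 2 lam + Real.logb 2 (dist (f w) (f x)) := by
      rw [Real.logb_mul (by positivity) (ne_of_gt hfwx),
        Real.logb_mul (by norm_num) (ne_of_gt hlam0)]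
      norm_num
    linarith
  -- lower bound on phiMap y (j+1)
  have hlb := phi_lb htheta hlam hf hxy hwy hwy_far
  -- upper bound p j ≤ -logb (dist (f w) (f x)) via annulus
  have hann := (mem_ann_iff (fun e => hwx (f.injective e)) (phiMap ⇑f x j)).1 hw2
  linarith [hann.2]

/-- spectral alignment up to ±1, up to scale `la`. -/
lemma alignP (x y : Z) (la : ℤ) (hxy : x ≠ y)
    (hla1 : (2:ℝ)^(-la-1) < dist x y) (hla2 : dist x y ≤ (2:ℝ)^(-la))
    {l : ℤ} (hl : l ∈ scaleSpectrum x) (hlla : l ≤ la) :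
    ∃ k ∈ scaleSpectrum y, l - 1 ≤ k ∧ k ≤ l + 1 := by
  by_cases hcase : l ≤ la - 2
  · obtain ⟨z, hz1, hz2⟩ := hl
    have hzx : z ≠ x := by
      intro e; subst e; simp only [dist_self] at hz1
      exact absurd hz1 (not_lt.2 (le_of_lt (two_zpow_pos _)))
    have haj : dist x y ≤ (2:ℝ)^(-l-2) := by
      refine le_trans hla2 (zpow_le_zpow_right₀ (by norm_num) (by omega))
    have h1 : (2:ℝ)^(-l-2) < dist z y := by
      have htri : dist z x ≤ dist z y + dist x y := by
        have := dist_triangle z y x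
        rw [dist_comm y x] at this; linarith
      have h2 : (2:ℝ)^(-l-1) < dist z y + (2:ℝ)^(-l-2) := by linarith
      rw [zpow_succ2 l] at h2; linarith
    have h2 : dist z y ≤ (2:ℝ)^(-l+1) := by
      have htri : dist z y ≤ dist z x + dist x y := dist_triangle z x y
      have e1 : (2:ℝ)^(-l+1) = 2^(-l) * 2 := by
        rw [show (-l+1:ℤ) = (-l)+1 by ring, zpow_add₀ (by norm_num : (2:ℝ) ≠ 0)]; norm_num
      have e2 : (2:ℝ)^(-l-2) ≤ 2^(-l) := zpow_le_zpow_right₀ (by norm_num) (by omega)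
      rw [e1]; nlinarith [two_zpow_pos (-l), two_zpow_pos (-l-2)]
    have hzy : z ≠ y := by
      intro e; subst e; simp only [dist_self] at h1
      exact absurd h1 (not_lt.2 (le_of_lt (two_zpow_pos _)))
    have hdzy : 0 < dist z y := dist_pos.2 hzy
    refine ⟨⌊-(Real.logb 2 (dist z y))⌋, mem_spectrum hzy, ?_, ?_⟩
    · -- l - 1 ≤ k :  from dist z y ≤ 2^{-l+1} : logb ≤ -l+1 : -logb ≥ l-1
      have := (dist_le_zpow hdzy).1 h2
      push_cast at this
      have h3 : (l:ℝ) - 1 ≤ -(Real.logb 2 (dist z y)) := by linarith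
      have := Int.lt_floor_add_one (-(Real.logb 2 (dist z y)))
      have h4 : (l:ℝ) - 1 < (⌊-(Real.logb 2 (dist z y))⌋ : ℝ) + 1 := by linarith
      have : l - 1 < ⌊-(Real.logb 2 (dist z y))⌋ + 1 := by exact_mod_cast h4
      omega
    · -- k ≤ l + 1 : from dist z y > 2^{-l-2} : logb > -l-2 : -logb < l+2
      have := (zpow_lt_dist hdzy).1 h1
      push_cast at this
      have h3 : -(Real.logb 2 (dist z y)) < (l:ℝ) + 2 := by linarith
      have h4 : (⌊-(Real.logb 2 (dist z y))⌋ : ℝ) ≤ -(Real.logb 2 (dist z y)) := Int.floor_le _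
      have : (⌊-(Real.logb 2 (dist z y))⌋ : ℝ) < (l:ℝ) + 2 := by linarith
      have : ⌊-(Real.logb 2 (dist z y))⌋ < l + 2 := by exact_mod_cast this
      omega
  · exact ⟨la, ⟨x, hla1, hla2⟩, by omega, by omega⟩

/-- φ is constant on spectral gaps. -/
lemma phi_const_of_gap {x : Z} {b : ℤ} :
    ∀ n : ℤ, b ≤ n → (∀ k, b < k → k ≤ n → k ∉ scaleSpectrum x) →
      phiMap ⇑f x n = phiMap ⇑f x b := by
  have main : ∀ n, b ≤ n →
      ((∀ k, b < k → k ≤ n → k ∉ scaleSpectrum x) → phiMap ⇑f x n = phiMap ⇑f x b) := by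
    refine Int.le_induction ?_ ?_
    · intro _; rfl
    · intro n hbn ih hgap
      have h1 : TS ⇑f x (n+1) = TS ⇑f x n := ts_step (hgap (n+1) (by omega) le_rfl)
      have h2 : phiMap ⇑f x (n+1) = phiMap ⇑f x n := by rw [phiMap_eq, phiMap_eq, h1]
      rw [h2]
      exact ih (fun k hk1 hk2 => hgap k hk1 (by omega))
  exact fun n hn hg => main n hn hg

end Cross
end Stmt18

namespace Stmt18
open Real

section Ext
variable {S : Set ℤ} {phi : ℤ → ℤ} {Phi : ℝ → ℝ}

lemma bracket (hS : S.Nonempty) (r : ℝ) :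
    (∃ l ∈ S, (l:ℝ) = r) ∨
    (∃ l₁ ∈ S, ∃ l₂ ∈ S, l₁ < l₂ ∧ (l₁:ℝ) < r ∧ r < (l₂:ℝ) ∧ ∀ l ∈ S, l ≤ l₁ ∨ l₂ ≤ l) ∨
    (∃ m ∈ S, (∀ l ∈ S, m ≤ l) ∧ r < (m:ℝ)) ∨
    (∃ M ∈ S, (∀ l ∈ S, l ≤ M) ∧ (M:ℝ) < r) := by
  by_cases hnode : ∃ l ∈ S, (l:ℝ) = r
  · exact Or.inl hnode
  push_neg at hnode
  by_cases hA : ∃ l, l ∈ S ∧ (l:ℝ) < r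
  · by_cases hB : ∃ l, l ∈ S ∧ r < (l:ℝ)
    · obtain ⟨l₁, ⟨hl₁S, hl₁r⟩, hl₁max⟩ := Int.exists_greatest_of_bdd
        ⟨⌊r⌋, fun z hz => Int.le_floor.2 (le_of_lt hz.2)⟩ hA
      obtain ⟨l₂, ⟨hl₂S, hl₂r⟩, hl₂min⟩ := Int.exists_least_of_bdd
        ⟨⌈r⌉, fun z hz => Int.ceil_le.2 (le_of_lt hz.2)⟩ hB
      refine Or.inr (Or.inl ⟨l₁, hl₁S, l₂, hl₂S, ?_, hl₁r, hl₂r, ?_⟩)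
      · have : (l₁:ℝ) < (l₂:ℝ) := lt_trans hl₁r hl₂r
        exact_mod_cast this
      · intro l hl
        rcases lt_trichotomy ((l:ℝ)) r with h | h | h
        · exact Or.inl (hl₁max l ⟨hl, h⟩)
        · exact absurd h (hnode l hl)
        · exact Or.inr (hl₂min l ⟨hl, h⟩)
    · push_neg at hB
      obtain ⟨M, hMS, hMmax⟩ := Int.exists_greatest_of_bdd
        ⟨⌊r⌋, fun z hz => Int.le_floor.2 (le_of_lt (lt_of_le_of_ne (hB z hz) (hnode z hz)))⟩ hS
      refine Or.inr (Or.inr (Or.inr ⟨M, hMS, hMmax, ?_⟩))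
      exact lt_of_le_of_ne (hB M hMS) (hnode M hMS)
  · push_neg at hA
    obtain ⟨m, hmS, hmmin⟩ := Int.exists_least_of_bdd
      ⟨⌈r⌉, fun z hz => Int.ceil_le.2 (hA z hz)⟩ hS
    refine Or.inr (Or.inr (Or.inl ⟨m, hmS, hmmin, ?_⟩))
    exact lt_of_le_of_ne (hA m hmS) (fun e => hnode m hmS e.symm)

lemma eval_gap (hext : IsLinearExtension S phi Phi) {l₁ l₂ : ℤ} (h1 : l₁ ∈ S) (h2 : l₂ ∈ S)
    (hlt : l₁ < l₂) (hgap : ∀ l ∈ S, l ≤ l₁ ∨ l₂ ≤ l) {r : ℝ}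
    (ha : (l₁:ℝ) ≤ r) (hb : r ≤ (l₂:ℝ)) :
    Phi r = (1 - (r - l₁)/((l₂:ℝ) - l₁)) * phi l₁ + ((r - l₁)/((l₂:ℝ) - l₁)) * phi l₂ := by
  have hgt : (0:ℝ) < (l₂:ℝ) - l₁ := by
    have : (l₁:ℝ) < (l₂:ℝ) := by exact_mod_cast hlt
    linarith
  set μ := (r - l₁)/((l₂:ℝ) - l₁) with hμdef
  have hμ : μ ∈ Set.Icc (0:ℝ) 1 :=
    ⟨div_nonneg (by linarith) (le_of_lt hgt), (div_le_one hgt).2 (by linarith)⟩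
  have hcancel : μ * ((l₂:ℝ) - l₁) = r - l₁ := div_mul_cancel₀ _ (ne_of_gt hgt)
  have he : (1-μ) * (l₁:ℝ) + μ * (l₂:ℝ) = r := by linear_combination hcancel
  have := hext.2.1 l₁ h1 l₂ h2 hlt hgap μ hμ
  rw [he] at this
  exact this

variable {th c : ℝ}

lemma nodeLip_ub (hth : 1 ≤ th) (hc : 0 ≤ c) (hS : S.Nonempty)
    (hext : IsLinearExtension S phi Phi)
    (hup : ∀ l₁ ∈ S, ∀ l₂ ∈ S, l₁ ≤ l₂ → (phi l₂ : ℝ) ≤ phi l₁ + th * ((l₂:ℝ) - l₁) + c)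
    (hdn : ∀ l₁ ∈ S, ∀ l₂ ∈ S, l₁ ≤ l₂ → (phi l₁ : ℝ) + ((l₂:ℝ) - l₁)/th - c ≤ phi l₂)
    {b : ℤ} (hb : b ∈ S) (r : ℝ) :
    Phi r ≤ (phi b : ℝ) + th * max (r - b) 0 + 2*c := by
  have hth0 : (0:ℝ) < th := lt_of_lt_of_le one_pos hth
  have hmax0 : 0 ≤ th * max (r - (b:ℝ)) 0 := mul_nonneg (le_of_lt hth0) (le_max_right _ _)
  rcases bracket hS r with ⟨l, hlS, hlr⟩ | ⟨l₁, h1, l₂, h2, hlt, ha, hb', hgap⟩ |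
    ⟨m, hm, hmin, hrm⟩ | ⟨M, hM, hmax, hMr⟩
  · have heval : Phi r = phi l := by rw [← hlr]; exact hext.1 l hlS
    rcases le_total l b with h | h
    · have hd := hdn l hlS b hb h
      have : (0:ℝ) ≤ ((b:ℝ) - l)/th := div_nonneg (by exact_mod_cast sub_nonneg.2 h) (le_of_lt hth0)
      linarith
    · have hu := hup b hb l hlS h
      have hrb : r - (b:ℝ) = (l:ℝ) - b := by rw [← hlr]
      have : max (r - (b:ℝ)) 0 = r - b := max_eq_left (by
        rw [hrb]; exact_mod_cast sub_nonneg.2 h)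
      rw [this, hrb]
      linarith
  · have heval := eval_gap hext h1 h2 hlt hgap (le_of_lt ha) (le_of_lt hb')
    have hgt : (0:ℝ) < (l₂:ℝ) - l₁ := by
      have : (l₁:ℝ) < (l₂:ℝ) := by exact_mod_cast hlt
      linarith
    set μ := (r - (l₁:ℝ))/((l₂:ℝ) - l₁) with hμdef
    have hμ0 : 0 ≤ μ := div_nonneg (by linarith) (le_of_lt hgt)
    have hμ1 : μ ≤ 1 := (div_le_one hgt).2 (by linarith)
    have hcancel : μ * ((l₂:ℝ) - l₁) = r - l₁ := div_mul_cancel₀ _ (ne_of_gt hgt)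
    have hΔup := hup l₁ h1 l₂ h2 (le_of_lt hlt)
    have hΔdn := hdn l₁ h1 l₂ h2 (le_of_lt hlt)
    rcases hgap b hb with hbl | hbl
    · have hub := hup b hb l₁ h1 hbl
      have hblr : (b:ℝ) ≤ l₁ := by exact_mod_cast hbl
      have hmaxe : max (r - (b:ℝ)) 0 = r - b := max_eq_left (by linarith)
      have k1 : μ * ((phi l₂:ℝ) - phi l₁) ≤ μ * (th*((l₂:ℝ)-l₁)+c) :=
        mul_le_mul_of_nonneg_left (by linarith) hμ0
      have k2 : μ * (th*((l₂:ℝ)-l₁)+c) = th*(r - l₁) + μ*c := by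
        linear_combination th * hcancel
      have k3 : μ*c ≤ c := by nlinarith
      rw [hmaxe]
      nlinarith [heval]
    · have hdb := hdn l₂ h2 b hb hbl
      have k2 : (1-μ)*(((l₂:ℝ)-l₁)/th - c) ≤ (1-μ)*((phi l₂:ℝ) - phi l₁) :=
        mul_le_mul_of_nonneg_left (by linarith) (by linarith)
      have k3 : 0 ≤ (1-μ)*(((l₂:ℝ)-l₁)/th) :=
        mul_nonneg (by linarith) (div_nonneg (le_of_lt hgt) (le_of_lt hth0))
      have k4 : 0 ≤ ((b:ℝ) - l₂)/th := div_nonneg (by exact_mod_cast sub_nonneg.2 hbl) (le_of_lt hth0)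
      nlinarith [heval]
  · have heval := hext.2.2.2 m hm hmin r (le_of_lt hrm)
    have hd := hdn m hm b hb (hmin b hb)
    have : (0:ℝ) ≤ ((b:ℝ) - m)/th := div_nonneg (by exact_mod_cast sub_nonneg.2 (hmin b hb)) (le_of_lt hth0)
    rw [heval]
    linarith
  · have heval := hext.2.2.1 M hM hmax r (le_of_lt hMr)
    have hu := hup b hb M hM (hmax b hb)
    have hbM : (b:ℝ) ≤ M := by exact_mod_cast hmax b hb
    have hrM : (M:ℝ) ≤ r := le_of_lt hMr
    have hmaxe : max (r - (b:ℝ)) 0 = r - b := max_eq_left (by linarith)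
    have k1 : r - (M:ℝ) ≤ th * (r - M) := by nlinarith
    rw [heval, hmaxe]
    nlinarith

lemma nodeLip_lb (hth : 1 ≤ th) (hc : 0 ≤ c) (hS : S.Nonempty)
    (hext : IsLinearExtension S phi Phi)
    (hup : ∀ l₁ ∈ S, ∀ l₂ ∈ S, l₁ ≤ l₂ → (phi l₂ : ℝ) ≤ phi l₁ + th * ((l₂:ℝ) - l₁) + c)
    (hdn : ∀ l₁ ∈ S, ∀ l₂ ∈ S, l₁ ≤ l₂ → (phi l₁ : ℝ) + ((l₂:ℝ) - l₁)/th - c ≤ phi l₂)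
    {b : ℤ} (hb : b ∈ S) (r : ℝ) :
    (phi b : ℝ) - th * max ((b:ℝ) - r) 0 - 2*c ≤ Phi r := by
  have hth0 : (0:ℝ) < th := lt_of_lt_of_le one_pos hth
  have hmax0 : 0 ≤ th * max ((b:ℝ) - r) 0 := mul_nonneg (le_of_lt hth0) (le_max_right _ _)
  rcases bracket hS r with ⟨l, hlS, hlr⟩ | ⟨l₁, h1, l₂, h2, hlt, ha, hb', hgap⟩ |
    ⟨m, hm, hmin, hrm⟩ | ⟨M, hM, hmax, hMr⟩
  · have heval : Phi r = phi l := by rw [← hlr]; exact hext.1 l hlS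
    rcases le_total l b with h | h
    · have hu := hup l hlS b hb h
      have hbr : (b:ℝ) - r = (b:ℝ) - l := by rw [← hlr]
      have hmaxe : max ((b:ℝ) - r) 0 = (b:ℝ) - r := max_eq_left (by
        rw [hbr]; exact_mod_cast sub_nonneg.2 h)
      rw [hmaxe, hbr]
      linarith
    · have hd := hdn b hb l hlS h
      have : (0:ℝ) ≤ ((l:ℝ) - b)/th := div_nonneg (by exact_mod_cast sub_nonneg.2 h) (le_of_lt hth0)
      linarith
  · have heval := eval_gap hext h1 h2 hlt hgap (le_of_lt ha) (le_of_lt hb')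
    have hgt : (0:ℝ) < (l₂:ℝ) - l₁ := by
      have : (l₁:ℝ) < (l₂:ℝ) := by exact_mod_cast hlt
      linarith
    set μ := (r - (l₁:ℝ))/((l₂:ℝ) - l₁) with hμdef
    have hμ0 : 0 ≤ μ := div_nonneg (by linarith) (le_of_lt hgt)
    have hμ1 : μ ≤ 1 := (div_le_one hgt).2 (by linarith)
    have hcancel : μ * ((l₂:ℝ) - l₁) = r - l₁ := div_mul_cancel₀ _ (ne_of_gt hgt)
    have hΔup := hup l₁ h1 l₂ h2 (le_of_lt hlt)
    have hΔdn := hdn l₁ h1 l₂ h2 (le_of_lt hlt)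
    rcases hgap b hb with hbl | hbl
    · -- b ≤ l₁ : lower bound via φ l₁
      have hdb := hdn b hb l₁ h1 hbl
      have k2 : μ*(((l₂:ℝ)-l₁)/th - c) ≤ μ*((phi l₂:ℝ) - phi l₁) :=
        mul_le_mul_of_nonneg_left (by linarith) hμ0
      have k3 : 0 ≤ μ*(((l₂:ℝ)-l₁)/th) :=
        mul_nonneg hμ0 (div_nonneg (le_of_lt hgt) (le_of_lt hth0))
      have k4 : 0 ≤ ((l₁:ℝ) - b)/th := div_nonneg (by exact_mod_cast sub_nonneg.2 hbl) (le_of_lt hth0)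
      have k5 : μ*c ≤ c := by nlinarith
      nlinarith [heval]
    · -- l₂ ≤ b
      have hub := hup l₂ h2 b hb hbl
      have hblr : (l₂:ℝ) ≤ b := by exact_mod_cast hbl
      have hmaxe : max ((b:ℝ) - r) 0 = (b:ℝ) - r := max_eq_left (by linarith)
      have k1 : (1-μ) * ((phi l₂:ℝ) - phi l₁) ≤ (1-μ) * (th*((l₂:ℝ)-l₁)+c) :=
        mul_le_mul_of_nonneg_left (by linarith) (by linarith)
      have k2 : (1-μ) * (th*((l₂:ℝ)-l₁)+c) = th*((l₂:ℝ) - r) + (1-μ)*c := by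
        linear_combination (-th) * hcancel
      have k3 : (1-μ)*c ≤ c := by nlinarith
      rw [hmaxe]
      nlinarith [heval]
  · have heval := hext.2.2.2 m hm hmin r (le_of_lt hrm)
    have hu := hup m hm b hb (hmin b hb)
    have hbm : (m:ℝ) ≤ b := by exact_mod_cast hmin b hb
    have hmaxe : max ((b:ℝ) - r) 0 = (b:ℝ) - r := max_eq_left (by linarith)
    have k1 : (m:ℝ) - r ≤ th * ((m:ℝ) - r) := by nlinarith
    rw [heval, hmaxe]
    nlinarith
  · have heval := hext.2.2.1 M hM hmax r (le_of_lt hMr)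
    have hd := hdn b hb M hM (hmax b hb)
    have : (0:ℝ) ≤ ((M:ℝ) - b)/th := div_nonneg (by exact_mod_cast sub_nonneg.2 (hmax b hb)) (le_of_lt hth0)
    rw [heval]
    have hbM : (b:ℝ) ≤ M := by exact_mod_cast hmax b hb
    linarith

end Ext
end Stmt18

namespace Stmt18
open Real

section Slopes
variable {Z : Type u} {W : Type v} [MetricSpace Z] [MetricSpace W]
variable {theta lam : ℝ} {f : Z ≃ₜ W}

lemma ann_ne {Z : Type u} [MetricSpace Z] {x w : Z} {l : ℤ} (h : w ∈ dyadicAnnulus x l) : w ≠ x := by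
  intro e; subst e
  have := h.1
  simp only [dist_self] at this
  exact absurd this (not_lt.2 (le_of_lt (two_zpow_pos _)))

/-- upper slope bound at spectrum pairs -/
lemma E3 (htheta : 1 ≤ theta) (hlam : 1 ≤ lam) (hf : IsPQS theta lam ⇑f)
    {x : Z} {l₁ l₂ : ℤ} (h1 : l₁ ∈ scaleSpectrum x) (h2 : l₂ ∈ scaleSpectrum x) (h : l₁ ≤ l₂) :
    (phiMap ⇑f x l₂ : ℝ) ≤ phiMap ⇑f x l₁ + theta * ((l₂:ℝ) - l₁)
      + 3*(theta + Real.logb 2 lam + 1) := by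
  have hL : (0:ℝ) ≤ Real.logb 2 lam := Real.logb_nonneg one_lt_two hlam
  obtain ⟨w2, hw2⟩ := h2
  obtain ⟨w1, hw1⟩ := h1
  have hw2x : w2 ≠ x := ann_ne hw2
  have hw1x : w1 ≠ x := ann_ne hw1
  have hd2 : 0 < dist w2 x := dist_pos.2 hw2x
  have hd1 : 0 < dist w1 x := dist_pos.2 hw1x
  have hlog2u : Real.logb 2 (dist w2 x) ≤ -(l₂:ℝ) := by
    have := (dist_le_zpow hd2).1 hw2.2; push_cast at this; linarith
  have hlog2l : -(l₂:ℝ) - 1 < Real.logb 2 (dist w2 x) := by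
    have := (zpow_lt_dist hd2).1 hw2.1; push_cast at this; linarith
  have hlog1u : Real.logb 2 (dist w1 x) ≤ -(l₁:ℝ) := by
    have := (dist_le_zpow hd1).1 hw1.2; push_cast at this; linarith
  have hcast : (l₁:ℝ) ≤ (l₂:ℝ) := by exact_mod_cast h
  have hub := phi_ub_pos htheta hlam hf hw2x (ts_nonempty hw2x hw2.1)
    (r := 1) (by linarith) (by norm_num)
  have hlb := phi_lb htheta hlam hf hw1x hw1x hw1.1
  have hlog := (logqs htheta hlam hf hw1x hw2x (r := (l₂:ℝ) - l₁ + 1)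
    (by linarith)).1 (by linarith)
  linarith

/-- lower slope bound at spectrum pairs -/
lemma E4 (htheta : 1 ≤ theta) (hlam : 1 ≤ lam) (hf : IsPQS theta lam ⇑f)
    {x : Z} {l₁ l₂ : ℤ} (h1 : l₁ ∈ scaleSpectrum x) (h2 : l₂ ∈ scaleSpectrum x) (h : l₁ ≤ l₂) :
    (phiMap ⇑f x l₁ : ℝ) + ((l₂:ℝ) - l₁)/theta - 3*(theta + Real.logb 2 lam + 1)
      ≤ phiMap ⇑f x l₂ := by
  have hL : (0:ℝ) ≤ Real.logb 2 lam := Real.logb_nonneg one_lt_two hlam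
  have htheta0 : (0:ℝ) < theta := lt_of_lt_of_le one_pos htheta
  rcases eq_or_lt_of_le h with he | hlt
  · subst he
    simp only [sub_self, zero_div]
    linarith
  obtain ⟨w2, hw2⟩ := h2
  obtain ⟨w1, hw1⟩ := h1
  have hw2x : w2 ≠ x := ann_ne hw2
  have hw1x : w1 ≠ x := ann_ne hw1
  have hd2 : 0 < dist w2 x := dist_pos.2 hw2x
  have hlog2u : Real.logb 2 (dist w2 x) ≤ -(l₂:ℝ) := by
    have := (dist_le_zpow hd2).1 hw2.2; push_cast at this; linarith
  have hcast : (l₁:ℝ) + 1 ≤ (l₂:ℝ) := by exact_mod_cast hlt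
  have hlb := phi_lb htheta hlam hf hw2x hw2x hw2.1
  have hub := phi_ub_neg htheta hlam hf hw2x (ts_nonempty hw1x hw1.1)
    (r := (l₁:ℝ) + 1 - l₂) (by linarith) (by linarith)
  have hdivs : ((l₁:ℝ) + 1 - l₂)/theta + ((l₂:ℝ) - l₁)/theta = 1/theta := by ring
  have hinv : 1/theta ≤ 1 := by
    rw [div_le_one htheta0]; exact htheta
  linarith

lemma phi_mono_S (htheta : 1 ≤ theta) (hlam : 1 ≤ lam) (hf : IsPQS theta lam ⇑f)
    {x : Z} {l₁ l₂ : ℤ} (h1 : l₁ ∈ scaleSpectrum x) (h : l₁ ≤ l₂) :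
    phiMap ⇑f x l₁ ≤ phiMap ⇑f x l₂ := by
  obtain ⟨w1, hw1⟩ := h1
  have hw1x : w1 ≠ x := ann_ne hw1
  exact phi_mono htheta hlam hf hw1x (ts_nonempty hw1x hw1.1) h

end Slopes
end Stmt18

namespace Stmt18
open Real

section Prim
variable {Z : Type u} {W : Type v} [MetricSpace Z] [MetricSpace W]
variable {theta lam : ℝ} {f : Z ≃ₜ W}

lemma F2wit (htheta : 1 ≤ theta) (hlam : 1 ≤ lam) (hf : IsPQS theta lam ⇑f)
    (x y : Z) (la : ℤ) (hxy : x ≠ y)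
    (hla1 : (2:ℝ)^(-la-1) < dist x y) (hla2 : dist x y ≤ (2:ℝ)^(-la))
    {j : ℤ} (hj : j ≤ la - 2) (hne : (TS ⇑f x j).Nonempty) :
    ∃ k ∈ scaleSpectrum y, k ≤ j + 1 := by
  have hyx : y ≠ x := Ne.symm hxy
  obtain ⟨w, hw1, hw2⟩ := phi_mem htheta hlam hf hyx hne
  have hwx : w ≠ x := by
    intro e; subst e; simp only [dist_self] at hw1
    exact absurd hw1 (not_lt.2 (le_of_lt (two_zpow_pos _)))
  have haj : dist x y ≤ (2:ℝ)^(-j-2) :=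
    le_trans hla2 (zpow_le_zpow_right₀ (by norm_num) (by omega))
  have hwy_far : (2:ℝ)^(-j-2) < dist w y := by
    have htri : dist w x ≤ dist w y + dist x y := by
      have := dist_triangle w y x
      rw [dist_comm y x] at this; linarith
    have h5 : (2:ℝ)^(-j-1) < dist w y + (2:ℝ)^(-j-2) := by linarith
    rw [zpow_succ2 j] at h5; linarith
  have hwy : w ≠ y := by
    intro e; subst e; simp only [dist_self] at hwy_far
    exact absurd hwy_far (not_lt.2 (le_of_lt (two_zpow_pos _)))
  have hdwy : 0 < dist w y := dist_pos.2 hwy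
  refine ⟨⌊-(Real.logb 2 (dist w y))⌋, mem_spectrum hwy, ?_⟩
  have hlg : -(j:ℝ) - 2 < Real.logb 2 (dist w y) := by
    have := (zpow_lt_dist hdwy).1 hwy_far; push_cast at this; linarith
  have h4 : (⌊-(Real.logb 2 (dist w y))⌋ : ℝ) ≤ -(Real.logb 2 (dist w y)) := Int.floor_le _
  have : (⌊-(Real.logb 2 (dist w y))⌋ : ℝ) < (j:ℝ) + 2 := by linarith
  have : ⌊-(Real.logb 2 (dist w y))⌋ < j + 2 := by exact_mod_cast this
  omega

lemma spec_lb (x y : Z) (la : ℤ) (hxy : x ≠ y)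
    (hla1 : (2:ℝ)^(-la-1) < dist x y) (hla2 : dist x y ≤ (2:ℝ)^(-la))
    {m : ℤ} (hmins : ∀ l ∈ scaleSpectrum x, m ≤ l) (hmla : m ≤ la) :
    ∀ k ∈ scaleSpectrum y, m - 1 ≤ k := by
  intro k hk
  by_cases hkla : k ≤ la
  · obtain ⟨j, hjS, hj1, hj2⟩ := alignP y x la (Ne.symm hxy)
      (by rwa [dist_comm]) (by rwa [dist_comm]) hk hkla
    have := hmins j hjS
    omega
  · omega

/-- main transfer bound : `Phiy r ≥ p j - penalty` for levels `j ≤ la - 2`. -/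
lemma prim_lb (htheta : 1 ≤ theta) (hlam : 1 ≤ lam) (hf : IsPQS theta lam ⇑f)
    (x y : Z) (la : ℤ) (hxy : x ≠ y)
    (hla1 : (2:ℝ)^(-la-1) < dist x y) (hla2 : dist x y ≤ (2:ℝ)^(-la))
    {Phiy : ℝ → ℝ} (hexty : IsLinearExtension (scaleSpectrum y) (phiMap ⇑f y) Phiy)
    {j : ℤ} (hj : j ≤ la - 2) (hne : (TS ⇑f x j).Nonempty) (r : ℝ) :
    (phiMap ⇑f x j : ℝ) - (Real.logb 2 lam + 2) - theta * max ((j:ℝ)+1-r) 0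
      - 2*(3*(theta + Real.logb 2 lam + 1)) ≤ Phiy r := by
  have hyx : y ≠ x := Ne.symm hxy
  have hla1' : (2:ℝ)^(-la-1) < dist y x := by rwa [dist_comm]
  have hla2' : dist y x ≤ (2:ℝ)^(-la) := by rwa [dist_comm]
  have laSy : la ∈ scaleSpectrum y := la_mem y x la hyx hla1' hla2'
  have hF2 := F2 htheta hlam hf x y la hxy hla1 hla2 hj hne
  obtain ⟨k0, hk0S, hk0le⟩ := F2wit htheta hlam hf x y la hxy hla1 hla2 hj hne
  -- greatest S_y node ≤ j+1
  obtain ⟨b, ⟨hbS, hble⟩, hbmax⟩ := Int.exists_greatest_of_bdd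
    (P := fun k => k ∈ scaleSpectrum y ∧ k ≤ j + 1)
    ⟨j+1, fun z hz => hz.2⟩ ⟨k0, hk0S, hk0le⟩
  have hqeq : phiMap ⇑f y (j+1) = phiMap ⇑f y b := by
    apply phi_const_of_gap (j+1) hble
    intro k hk1 hk2 hkS
    have := hbmax k ⟨hkS, hk2⟩
    omega
  have hnl := nodeLip_lb (th := theta) (c := 3*(theta + Real.logb 2 lam + 1))
    htheta (by nlinarith [Real.logb_nonneg one_lt_two hlam]) ⟨la, laSy⟩ hexty
    (fun l₁ h1 l₂ h2 h => E3 htheta hlam hf h1 h2 h)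
    (fun l₁ h1 l₂ h2 h => E4 htheta hlam hf h1 h2 h) hbS r
  have hmax : max ((b:ℝ) - r) 0 ≤ max ((j:ℝ)+1-r) 0 := by
    apply max_le_max _ le_rfl
    have : (b:ℝ) ≤ (j:ℝ)+1 := by exact_mod_cast hble
    linarith
  have hth0 : (0:ℝ) < theta := lt_of_lt_of_le one_pos htheta
  have hmul : theta * max ((b:ℝ) - r) 0 ≤ theta * max ((j:ℝ)+1-r) 0 :=
    mul_le_mul_of_nonneg_left hmax (le_of_lt hth0)
  have hcast : (phiMap ⇑f y (j+1) : ℝ) = (phiMap ⇑f y b : ℝ) := by exact_mod_cast hqeq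
  linarith

end Prim
end Stmt18

namespace Stmt18
open Real

section OneSided
variable {Z : Type u} {W : Type v} [MetricSpace Z] [MetricSpace W]
variable {theta lam : ℝ} {f : Z ≃ₜ W}

set_option maxHeartbeats 3000000 in
lemma one_sided (htheta : 1 ≤ theta) (hlam : 1 ≤ lam) (hf : IsPQS theta lam ⇑f)
    (x y : Z) (la : ℤ) (hxy : x ≠ y)
    (hla1 : (2:ℝ)^(-la-1) < dist x y) (hla2 : dist x y ≤ (2:ℝ)^(-la))
    {Phix Phiy : ℝ → ℝ}
    (hextx : IsLinearExtension (scaleSpectrum x) (phiMap ⇑f x) Phix)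
    (hexty : IsLinearExtension (scaleSpectrum y) (phiMap ⇑f y) Phiy)
    {T : ℝ} (hT : T ≤ -(Real.logb 2 (dist x y))) :
    Phix T ≤ Phiy T + 40*(theta + Real.logb 2 lam + 1) := by
  have hΛ0 : 0 ≤ Real.logb 2 lam := Real.logb_nonneg one_lt_two hlam
  have hth0 : (0:ℝ) < theta := lt_of_lt_of_le one_pos htheta
  have hc10 : (0:ℝ) ≤ 3*(theta + Real.logb 2 lam + 1) := by nlinarith only [hΛ0, hth0]
  have hyx : y ≠ x := Ne.symm hxy
  have hla1' : (2:ℝ)^(-la-1) < dist y x := by rwa [dist_comm]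
  have hla2' : dist y x ≤ (2:ℝ)^(-la) := by rwa [dist_comm]
  have laSx : la ∈ scaleSpectrum x := la_mem x y la hxy hla1 hla2
  have laSy : la ∈ scaleSpectrum y := la_mem y x la hyx hla1' hla2'
  have hSx : (scaleSpectrum x).Nonempty := ⟨la, laSx⟩
  have hSy : (scaleSpectrum y).Nonempty := ⟨la, laSy⟩
  have hupx : ∀ l₁ ∈ scaleSpectrum x, ∀ l₂ ∈ scaleSpectrum x, l₁ ≤ l₂ →
      (phiMap ⇑f x l₂ : ℝ) ≤ phiMap ⇑f x l₁ + theta * ((l₂:ℝ) - l₁)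
        + 3*(theta + Real.logb 2 lam + 1) :=
    fun l₁ h1 l₂ h2 h => E3 htheta hlam hf h1 h2 h
  have hdnx : ∀ l₁ ∈ scaleSpectrum x, ∀ l₂ ∈ scaleSpectrum x, l₁ ≤ l₂ →
      (phiMap ⇑f x l₁ : ℝ) + ((l₂:ℝ) - l₁)/theta - 3*(theta + Real.logb 2 lam + 1)
        ≤ phiMap ⇑f x l₂ :=
    fun l₁ h1 l₂ h2 h => E4 htheta hlam hf h1 h2 h
  have hupy : ∀ l₁ ∈ scaleSpectrum y, ∀ l₂ ∈ scaleSpectrum y, l₁ ≤ l₂ →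
      (phiMap ⇑f y l₂ : ℝ) ≤ phiMap ⇑f y l₁ + theta * ((l₂:ℝ) - l₁)
        + 3*(theta + Real.logb 2 lam + 1) :=
    fun l₁ h1 l₂ h2 h => E3 htheta hlam hf h1 h2 h
  have hdny : ∀ l₁ ∈ scaleSpectrum y, ∀ l₂ ∈ scaleSpectrum y, l₁ ≤ l₂ →
      (phiMap ⇑f y l₁ : ℝ) + ((l₂:ℝ) - l₁)/theta - 3*(theta + Real.logb 2 lam + 1)
        ≤ phiMap ⇑f y l₂ :=
    fun l₁ h1 l₂ h2 h => E4 htheta hlam hf h1 h2 h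
  have hdla : 0 < dist x y := dist_pos.2 hxy
  have hTla : T < (la:ℝ) + 1 := by
    have := (zpow_lt_dist hdla).1 hla1
    push_cast at this; linarith
  have hE2x := E2 htheta hlam hf x y la hxy hla1 hla2
  have hE2y : (phiMap ⇑f y la : ℝ) ≤ -(Real.logb 2 (dist (f x) (f y))) + Real.logb 2 lam + theta := by
    have := E2 htheta hlam hf y x la hyx hla1' hla2'
    rwa [dist_comm (f y) (f x)] at this
  have hE2'x : -(Real.logb 2 (dist (f x) (f y))) - 1 ≤ (phiMap ⇑f x la : ℝ) :=
    E2' htheta hlam hf x y la hxy hla1 hla2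
  have hE2'y : -(Real.logb 2 (dist (f x) (f y))) - 1 ≤ (phiMap ⇑f y la : ℝ) := by
    have := E2' htheta hlam hf y x la hyx hla1' hla2'
    rwa [dist_comm (f y) (f x)] at this
  by_cases hcaseA : (la:ℝ) - 7 ≤ T
  · -- CASE A : T near la
    have hux := nodeLip_ub htheta hc10 hSx hextx hupx hdnx laSx T
    have hly := nodeLip_lb htheta hc10 hSy hexty hupy hdny laSy T
    have hm1 : max (T - (la:ℝ)) 0 ≤ 1 := max_le (by linarith) (by norm_num)
    have hm2 : max ((la:ℝ) - T) 0 ≤ 7 := max_le (by linarith) (by norm_num)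
    have hmm1 := mul_le_mul_of_nonneg_left hm1 (le_of_lt hth0)
    have hmm2 := mul_le_mul_of_nonneg_left hm2 (le_of_lt hth0)
    linarith only [hux, hly, hmm1, hmm2, hE2x, hE2'y, hΛ0, htheta]
  push_neg at hcaseA
  -- CASE B : T < la - 7
  rcases bracket hSx T with ⟨l, hlS, hlr⟩ | ⟨l₁, h1, l₂, h2, hlt, hal, hbl, hgap⟩ |
    ⟨m, hmS, hmins, hTm⟩ | ⟨M, hMS, hmaxs, hMr⟩
  · -- B-node
    have heval : Phix T = (phiMap ⇑f x l : ℝ) := by rw [← hlr]; exact hextx.1 l hlS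
    have hlla : l ≤ la - 2 := by
      have h5 : (l:ℝ) < ((la - 7 : ℤ):ℝ) := by push_cast; rw [hlr]; linarith
      have : l < la - 7 := by exact_mod_cast h5
      omega
    obtain ⟨w, hw⟩ := hlS
    have hne : (TS ⇑f x l).Nonempty := ts_nonempty (ann_ne hw) hw.1
    have hp := prim_lb htheta hlam hf x y la hxy hla1 hla2 hexty hlla hne T
    have hmax1 : max ((l:ℝ)+1-T) 0 ≤ 1 := max_le (by rw [← hlr]; linarith) (by norm_num)
    have hmm := mul_le_mul_of_nonneg_left hmax1 (le_of_lt hth0)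
    linarith only [heval, hp, hmm, hΛ0, htheta]
  · -- B-gap
    have hl₁la : l₁ ≤ la - 8 := by
      have h5 : (l₁:ℝ) < ((la - 7 : ℤ):ℝ) := by push_cast; linarith
      have : l₁ < la - 7 := by exact_mod_cast h5
      omega
    have hl₂la : l₂ ≤ la := by
      rcases hgap la laSx with h | h
      · omega
      · exact h
    have hl₂r : (l₂:ℝ) ≤ (la:ℝ) := by exact_mod_cast hl₂la
    have hevalx := eval_gap hextx h1 h2 hlt hgap (le_of_lt hal) (le_of_lt hbl)
    have hg : (0:ℝ) < (l₂:ℝ) - l₁ := by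
      have : (l₁:ℝ) < (l₂:ℝ) := by exact_mod_cast hlt
      linarith
    set μ := (T - (l₁:ℝ))/((l₂:ℝ) - l₁) with hμdef
    have hμ0 : 0 ≤ μ := div_nonneg (by linarith) (le_of_lt hg)
    have hμ1 : μ ≤ 1 := (div_le_one hg).2 (by linarith)
    have hcancel : μ * ((l₂:ℝ) - l₁) = T - l₁ := div_mul_cancel₀ _ (ne_of_gt hg)
    have hmono12 : phiMap ⇑f x l₁ ≤ phiMap ⇑f x l₂ := phi_mono_S htheta hlam hf h1 (le_of_lt hlt)
    have hmono12' : (phiMap ⇑f x l₁ : ℝ) ≤ (phiMap ⇑f x l₂ : ℝ) := by exact_mod_cast hmono12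
    have hΔup := hupx l₁ h1 l₂ h2 (le_of_lt hlt)
    obtain ⟨w1, hw1⟩ := id h1
    have hne1 : (TS ⇑f x l₁).Nonempty := ts_nonempty (ann_ne hw1) hw1.1
    obtain ⟨w2, hw2⟩ := id h2
    have hne2 : (TS ⇑f x l₂).Nonempty := ts_nonempty (ann_ne hw2) hw2.1
    have hxval : Phix T = (phiMap ⇑f x l₁ : ℝ)
        + μ * ((phiMap ⇑f x l₂ : ℝ) - (phiMap ⇑f x l₁ : ℝ)) := by
      rw [hevalx]; ring
    by_cases hst : (l₂:ℝ) - T ≤ 4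
    · -- SHORT TOP
      have hp2 : Phix T ≤ (phiMap ⇑f x l₂ : ℝ) := by
        have h9 := mul_nonneg (by linarith only [hμ1] : (0:ℝ) ≤ 1 - μ)
          (by linarith only [hmono12'] : (0:ℝ) ≤ (phiMap ⇑f x l₂ : ℝ) - (phiMap ⇑f x l₁ : ℝ))
        nlinarith only [hxval, h9]
      have hl₂la2 : l₂ ≤ la - 2 := by
        have h5 : (l₂:ℝ) < ((la - 3 : ℤ):ℝ) := by push_cast; linarith
        have : l₂ < la - 3 := by exact_mod_cast h5
        omega
      have hp := prim_lb htheta hlam hf x y la hxy hla1 hla2 hexty hl₂la2 hne2 T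
      have hmax1 : max ((l₂:ℝ)+1-T) 0 ≤ 5 := max_le (by linarith only [hst]) (by norm_num)
      have hmm := mul_le_mul_of_nonneg_left hmax1 (le_of_lt hth0)
      linarith only [hp2, hp, hmm, hΛ0, htheta]
    by_cases hsb : T - (l₁:ℝ) ≤ 4
    · -- SHORT BOTTOM
      have hkey : μ * ((phiMap ⇑f x l₂ : ℝ) - (phiMap ⇑f x l₁ : ℝ))
          ≤ theta*(T - l₁) + 3*(theta + Real.logb 2 lam + 1) := by
        have k1 : μ * ((phiMap ⇑f x l₂ : ℝ) - (phiMap ⇑f x l₁ : ℝ))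
            ≤ μ * (theta*((l₂:ℝ)-l₁) + 3*(theta + Real.logb 2 lam + 1)) :=
          mul_le_mul_of_nonneg_left (by linarith) hμ0
        have k2 : μ * (theta*((l₂:ℝ)-l₁)) = theta*(T-l₁) := by
          linear_combination theta * hcancel
        linarith only [k1, k2, mul_le_mul_of_nonneg_right hμ1 hc10]
      have hl₁la2 : l₁ ≤ la - 2 := by omega
      have hp := prim_lb htheta hlam hf x y la hxy hla1 hla2 hexty hl₁la2 hne1 T
      have hmax1 : max ((l₁:ℝ)+1-T) 0 ≤ 1 := max_le (by linarith) (by norm_num)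
      have hmm := mul_le_mul_of_nonneg_left hmax1 (le_of_lt hth0)
      have hmm2 : theta*(T - (l₁:ℝ)) ≤ theta*4 := mul_le_mul_of_nonneg_left hsb (le_of_lt hth0)
      linarith only [hxval, hkey, hp, hmm, hmm2, hΛ0, htheta]
    -- LONG CASE
    push_neg at hst hsb
    have hgg : 9 ≤ l₂ - l₁ := by
      have h5 : ((l₂ - l₁ : ℤ):ℝ) > 8 := by push_cast; linarith
      have : (8:ℤ) < l₂ - l₁ := by exact_mod_cast h5
      omega
    rcases bracket hSy T with ⟨k, hkS, hkr⟩ | ⟨b₁, hb1S, b₂, hb2S, hblt, hba, hbb, hbgap⟩ |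
      ⟨my, hmyS, hminy, hTmy⟩ | ⟨My, hMyS, hmaxy, hMyr⟩
    · -- y-node at T : impossible
      exfalso
      have hkla : k ≤ la := by
        have h5 : (k:ℝ) < (la:ℝ) := by rw [hkr]; linarith
        have : k < la := by exact_mod_cast h5
        omega
      obtain ⟨j, hjS, hj1, hj2⟩ := alignP y x la hyx hla1' hla2' hkS hkla
      have hj1r : (k:ℝ) - 1 ≤ (j:ℝ) := by exact_mod_cast hj1
      have hj2r : (j:ℝ) ≤ (k:ℝ) + 1 := by exact_mod_cast hj2
      rcases hgap j hjS with h | h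
      · have : (j:ℝ) ≤ (l₁:ℝ) := by exact_mod_cast h
        rw [hkr] at hj1r
        linarith
      · have : (l₂:ℝ) ≤ (j:ℝ) := by exact_mod_cast h
        rw [hkr] at hj2r
        linarith
    · -- MAIN LONG-GAP CASE
      have hb₂la : b₂ ≤ la := by
        rcases hbgap la laSy with h | h
        · exfalso
          have : (la:ℝ) ≤ (b₁:ℝ) := by exact_mod_cast h
          linarith
        · exact h
      have hb₂lar : (b₂:ℝ) ≤ (la:ℝ) := by exact_mod_cast hb₂la
      have hb₁la : b₁ ≤ la := by
        have : (b₁:ℝ) < (la:ℝ) := by linarith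
        have : b₁ < la := by exact_mod_cast this
        omega
      -- (i) T + 2 < b₂
      have hi : T + 2 < (b₂:ℝ) := by
        by_contra hcon
        push_neg at hcon
        obtain ⟨j, hjS, hj1, hj2⟩ := alignP y x la hyx hla1' hla2' hb2S hb₂la
        have hj1r : (b₂:ℝ) - 1 ≤ (j:ℝ) := by exact_mod_cast hj1
        have hj2r : (j:ℝ) ≤ (b₂:ℝ) + 1 := by exact_mod_cast hj2
        rcases hgap j hjS with h | h
        · have : (j:ℝ) ≤ (l₁:ℝ) := by exact_mod_cast h
          linarith
        · have : (l₂:ℝ) ≤ (j:ℝ) := by exact_mod_cast h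
          linarith
      -- (ii) b₁ < T - 1
      have hii : (b₁:ℝ) < T - 1 := by
        by_contra hcon
        push_neg at hcon
        obtain ⟨j, hjS, hj1, hj2⟩ := alignP y x la hyx hla1' hla2' hb1S hb₁la
        have hj1r : (b₁:ℝ) - 1 ≤ (j:ℝ) := by exact_mod_cast hj1
        have hj2r : (j:ℝ) ≤ (b₁:ℝ) + 1 := by exact_mod_cast hj2
        rcases hgap j hjS with h | h
        · have : (j:ℝ) ≤ (l₁:ℝ) := by exact_mod_cast h
          linarith
        · have : (l₂:ℝ) ≤ (j:ℝ) := by exact_mod_cast h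
          linarith
      -- (iii) l₁ - 1 ≤ b₁
      have hiii : l₁ - 1 ≤ b₁ := by
        obtain ⟨k, hkS, hk1, hk2⟩ := alignP x y la hxy hla1 hla2 h1 (by omega)
        have hk2r : (k:ℝ) ≤ (l₁:ℝ) + 1 := by exact_mod_cast hk2
        rcases hbgap k hkS with h | h
        · omega
        · exfalso
          have : (b₂:ℝ) ≤ (k:ℝ) := by exact_mod_cast h
          linarith
      -- (iv) b₁ ≤ l₁ + 1
      have hiv : b₁ ≤ l₁ + 1 := by
        obtain ⟨j, hjS, hj1, hj2⟩ := alignP y x la hyx hla1' hla2' hb1S hb₁la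
        have hj1r : (b₁:ℝ) - 1 ≤ (j:ℝ) := by exact_mod_cast hj1
        rcases hgap j hjS with h | h
        · omega
        · exfalso
          have : (l₂:ℝ) ≤ (j:ℝ) := by exact_mod_cast h
          have : (j:ℝ) ≤ (b₁:ℝ) + 1 := by exact_mod_cast hj2
          linarith
      -- (v) l₂ - 1 ≤ b₂
      have hv : l₂ - 1 ≤ b₂ := by
        obtain ⟨j, hjS, hj1, hj2⟩ := alignP y x la hyx hla1' hla2' hb2S hb₂la
        have hj1r : (b₂:ℝ) - 1 ≤ (j:ℝ) := by exact_mod_cast hj1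
        rcases hgap j hjS with h | h
        · exfalso
          have : (j:ℝ) ≤ (l₁:ℝ) := by exact_mod_cast h
          linarith
        · omega
      -- (vi) b₂ ≤ l₂ + 1
      have hvi : b₂ ≤ l₂ + 1 := by
        obtain ⟨k, hkS, hk1, hk2⟩ := alignP x y la hxy hla1 hla2 h2 hl₂la
        have hk1r : (l₂:ℝ) - 1 ≤ (k:ℝ) := by exact_mod_cast hk1
        rcases hbgap k hkS with h | h
        · exfalso
          have : (k:ℝ) ≤ (b₁:ℝ) := by exact_mod_cast h
          linarith
        · omega
      -- V1
      have hV1 : (phiMap ⇑f x l₁ : ℝ) ≤ (phiMap ⇑f y b₁ : ℝ) + (Real.logb 2 lam + 2) := by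
        have hF2 := F2 htheta hlam hf x y la hxy hla1 hla2 (by omega : l₁ ≤ la - 2) hne1
        have heq : phiMap ⇑f y (l₁+1) = phiMap ⇑f y b₁ := by
          apply phi_const_of_gap (l₁+1) (by omega)
          intro k hk1 hk2 hkS
          rcases hbgap k hkS with h | h
          · omega
          · omega
        rw [heq] at hF2
        exact hF2
      -- V2
      have hV2 : (phiMap ⇑f x l₂ : ℝ) ≤ (phiMap ⇑f y b₂ : ℝ)
          + (2*(Real.logb 2 lam) + 3*theta + 3*(theta + Real.logb 2 lam + 1) + 3) := by
        by_cases hc : l₂ ≤ la - 2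
        · have hF2 := F2 htheta hlam hf x y la hxy hla1 hla2 hc hne2
          obtain ⟨b', ⟨hb'S, hb'le⟩, hb'max⟩ := Int.exists_greatest_of_bdd
            (P := fun k => k ∈ scaleSpectrum y ∧ k ≤ l₂ + 1)
            ⟨l₂+1, fun z hz => hz.2⟩ ⟨b₂, hb2S, by omega⟩
          have heq : phiMap ⇑f y (l₂+1) = phiMap ⇑f y b' := by
            apply phi_const_of_gap (l₂+1) hb'le
            intro k hk1 hk2 hkS
            have := hb'max k ⟨hkS, hk2⟩
            omega
          have hb₂b' : b₂ ≤ b' := hb'max b₂ ⟨hb2S, by omega⟩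
          have hE3y := hupy b₂ hb2S b' hb'S hb₂b'
          have hbd : (b':ℝ) - b₂ ≤ 2 := by
            have e1 : (b':ℝ) ≤ (l₂:ℝ) + 1 := by exact_mod_cast hb'le
            have e2 : (l₂:ℝ) - 1 ≤ (b₂:ℝ) := by exact_mod_cast hv
            linarith
          have hbd0 : (0:ℝ) ≤ (b':ℝ) - b₂ := by
            have : (b₂:ℝ) ≤ (b':ℝ) := by exact_mod_cast hb₂b'
            linarith
          have hmm : theta * ((b':ℝ) - b₂) ≤ theta * 2 :=
            mul_le_mul_of_nonneg_left hbd (le_of_lt hth0)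
          rw [heq] at hF2
          linarith
        · -- l₂ ∈ {la-1, la}
          have h5 : phiMap ⇑f x l₂ ≤ phiMap ⇑f x la := phi_mono_S htheta hlam hf h2 hl₂la
          have h5' : (phiMap ⇑f x l₂ : ℝ) ≤ (phiMap ⇑f x la : ℝ) := by exact_mod_cast h5
          have hE3y := hupy b₂ hb2S la laSy hb₂la
          have hbd : (la:ℝ) - b₂ ≤ 2 := by
            have e2 : (l₂:ℝ) - 1 ≤ (b₂:ℝ) := by exact_mod_cast hv
            have e3 : (la:ℝ) - 1 ≤ (l₂:ℝ) := by
              have : la - 1 ≤ l₂ := by omega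
              exact_mod_cast this
            linarith
          have hmm : theta * ((la:ℝ) - b₂) ≤ theta * 2 :=
            mul_le_mul_of_nonneg_left hbd (le_of_lt hth0)
          linarith
      -- weight algebra
      have hevaly := eval_gap hexty hb1S hb2S hblt hbgap (le_of_lt hba) (le_of_lt hbb)
      have hg' : (0:ℝ) < (b₂:ℝ) - b₁ := by
        have : (b₁:ℝ) < (b₂:ℝ) := by exact_mod_cast hblt
        linarith
      set ν := (T - (b₁:ℝ))/((b₂:ℝ) - b₁) with hνdef
      have hν0 : 0 ≤ ν := div_nonneg (by linarith) (le_of_lt hg')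
      have hν1 : ν ≤ 1 := (div_le_one hg').2 (by linarith)
      have hνcancel : ν * ((b₂:ℝ) - b₁) = T - b₁ := div_mul_cancel₀ _ (ne_of_gt hg')
      have hyval : Phiy T = (phiMap ⇑f y b₁ : ℝ)
          + ν * ((phiMap ⇑f y b₂ : ℝ) - (phiMap ⇑f y b₁ : ℝ)) := by
        rw [hevaly]; ring
      -- lower bound for Phiy T in terms of p-values
      have hCV : Real.logb 2 lam + 2 ≤ 2*(Real.logb 2 lam) + 3*theta + 3*(theta + Real.logb 2 lam + 1) + 3 := by
        nlinarith only [hΛ0, hth0]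
      have hylow : (phiMap ⇑f x l₁ : ℝ)
          + ν * ((phiMap ⇑f x l₂ : ℝ) - (phiMap ⇑f x l₁ : ℝ))
          - (2*(Real.logb 2 lam) + 3*theta + 3*(theta + Real.logb 2 lam + 1) + 3) ≤ Phiy T := by
        have u1 : (1-ν)*((phiMap ⇑f x l₁ : ℝ) - (2*(Real.logb 2 lam) + 3*theta + 3*(theta + Real.logb 2 lam + 1) + 3))
            ≤ (1-ν)*(phiMap ⇑f y b₁ : ℝ) :=
          mul_le_mul_of_nonneg_left (by linarith only [hV1, hCV]) (by linarith only [hν1])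
        have u2 : ν*((phiMap ⇑f x l₂ : ℝ) - (2*(Real.logb 2 lam) + 3*theta + 3*(theta + Real.logb 2 lam + 1) + 3))
            ≤ ν*(phiMap ⇑f y b₂ : ℝ) :=
          mul_le_mul_of_nonneg_left (by linarith only [hV2]) hν0
        nlinarith only [hyval, u1, u2]
      -- the weight difference bound
      have hΔ0 : (0:ℝ) ≤ (phiMap ⇑f x l₂ : ℝ) - (phiMap ⇑f x l₁ : ℝ) := by linarith
      have hG'le : ((b₂:ℝ) - b₁) - ((l₂:ℝ) - l₁) ≤ 2 := by
        have e1 : (b₂:ℝ) ≤ (l₂:ℝ) + 1 := by exact_mod_cast hvi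
        have e2 : (l₁:ℝ) - 1 ≤ (b₁:ℝ) := by exact_mod_cast hiii
        linarith
      have hGle : ((l₂:ℝ) - l₁) ≤ ((b₂:ℝ) - b₁) + 2 := by
        have e1 : (l₂:ℝ) - 1 ≤ (b₂:ℝ) := by exact_mod_cast hv
        have e2 : (b₁:ℝ) ≤ (l₁:ℝ) + 1 := by exact_mod_cast hiv
        linarith
      have hb1l1 : (b₁:ℝ) - l₁ ≤ 1 := by
        have : (b₁:ℝ) ≤ (l₁:ℝ) + 1 := by exact_mod_cast hiv
        linarith
      have key2 : ((μ-ν)*((b₂:ℝ)-b₁))*((l₂:ℝ)-l₁)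
          = (T - l₁)*(((b₂:ℝ)-b₁)-((l₂:ℝ)-l₁)) + ((l₂:ℝ)-l₁)*((b₁:ℝ)-l₁) := by
        linear_combination ((b₂:ℝ)-b₁) * hcancel - ((l₂:ℝ)-l₁) * hνcancel
      have keynum : (T - (l₁:ℝ))*(((b₂:ℝ)-b₁)-((l₂:ℝ)-l₁)) + ((l₂:ℝ)-l₁)*((b₁:ℝ)-l₁)
          ≤ 3*((l₂:ℝ)-l₁) := by
        have t1 : (T - (l₁:ℝ))*(((b₂:ℝ)-b₁)-((l₂:ℝ)-l₁)) ≤ (T - (l₁:ℝ))*2 :=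
          mul_le_mul_of_nonneg_left hG'le (by linarith)
        have t2 : ((l₂:ℝ)-l₁)*((b₁:ℝ)-l₁) ≤ ((l₂:ℝ)-l₁)*1 :=
          mul_le_mul_of_nonneg_left hb1l1 (le_of_lt hg)
        linarith only [t1, t2, hbl, hal, hg]
      have key3 : (μ-ν)*((b₂:ℝ)-b₁) ≤ 3 := by
        by_contra hcon
        push_neg at hcon
        have h9 := mul_lt_mul_of_pos_right hcon hg
        linarith only [h9, key2, keynum]
      have hwt : μ * ((phiMap ⇑f x l₂ : ℝ) - (phiMap ⇑f x l₁ : ℝ))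
          ≤ ν * ((phiMap ⇑f x l₂ : ℝ) - (phiMap ⇑f x l₁ : ℝ))
            + (5*theta + 3*(theta + Real.logb 2 lam + 1)) := by
        rcases le_or_gt (μ - ν) 0 with hmn | hmn
        · have h9 := mul_nonpos_of_nonpos_of_nonneg hmn hΔ0
          linarith only [h9, hΛ0, hth0]
        · have hΔub2 : (phiMap ⇑f x l₂ : ℝ) - (phiMap ⇑f x l₁ : ℝ)
              ≤ theta*(((b₂:ℝ)-b₁)+2) + 3*(theta + Real.logb 2 lam + 1) := by
            linarith only [hΔup, mul_le_mul_of_nonneg_left hGle (le_of_lt hth0)]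
          have hμν1 : μ - ν ≤ 1 := by linarith only [hμ1, hν0]
          have t1 : (μ-ν)*((phiMap ⇑f x l₂ : ℝ) - (phiMap ⇑f x l₁ : ℝ))
              ≤ (μ-ν)*(theta*((b₂:ℝ)-b₁) + 2*theta + 3*(theta + Real.logb 2 lam + 1)) :=
            mul_le_mul_of_nonneg_left (by linarith only [hΔub2]) (le_of_lt hmn)
          have t2 : theta*((μ-ν)*((b₂:ℝ)-b₁)) ≤ theta*3 :=
            mul_le_mul_of_nonneg_left key3 (le_of_lt hth0)
          have t3 : (μ-ν)*(2*theta + 3*(theta + Real.logb 2 lam + 1))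
              ≤ 1*(2*theta + 3*(theta + Real.logb 2 lam + 1)) :=
            mul_le_mul_of_nonneg_right hμν1 (by nlinarith only [hΛ0, hth0])
          linarith only [t1, t2, t3]
      linarith only [hxval, hylow, hwt, hΛ0, htheta]
    · -- y-min : impossible in long case
      exfalso
      obtain ⟨k, hkS, hk1, hk2⟩ := alignP x y la hxy hla1 hla2 h1 (by omega)
      have := hminy k hkS
      have h5 : (my:ℝ) ≤ (k:ℝ) := by exact_mod_cast this
      have h6 : (k:ℝ) ≤ (l₁:ℝ) + 1 := by exact_mod_cast hk2
      linarith
    · -- y-max : impossible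
      exfalso
      have := hmaxy la laSy
      have h5 : (la:ℝ) ≤ (My:ℝ) := by exact_mod_cast this
      linarith
  · -- B-min
    have hmla : m ≤ la := hmins la laSx
    have hevalx := hextx.2.2.2 m hmS hmins T (le_of_lt hTm)
    obtain ⟨my, hmyS, hminy⟩ := Int.exists_least_of_bdd
      ⟨m - 1, spec_lb x y la hxy hla1 hla2 hmins hmla⟩ hSy
    have hmy1 : m - 1 ≤ my := spec_lb x y la hxy hla1 hla2 hmins hmla my hmyS
    have hmy2 : my ≤ m + 1 := by
      obtain ⟨k, hkS, hk1, hk2⟩ := alignP x y la hxy hla1 hla2 hmS hmla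
      have := hminy k hkS; omega
    obtain ⟨wm, hwm⟩ := id hmS
    have hnem : (TS ⇑f x m).Nonempty := ts_nonempty (ann_ne hwm) hwm.1
    -- value bound : p m ≤ q my + CB
    have hqmy : (phiMap ⇑f x m : ℝ) ≤ (phiMap ⇑f y my : ℝ)
        + (2*(Real.logb 2 lam) + 5*theta + 3*(theta + Real.logb 2 lam + 1) + 3) := by
      by_cases hm2 : m ≤ la - 2
      · have hF2 := F2 htheta hlam hf x y la hxy hla1 hla2 hm2 hnem
        obtain ⟨b', ⟨hb'S, hb'le⟩, hb'max⟩ := Int.exists_greatest_of_bdd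
          (P := fun k => k ∈ scaleSpectrum y ∧ k ≤ m + 1)
          ⟨m+1, fun z hz => hz.2⟩ ⟨my, hmyS, hmy2⟩
        have heq : phiMap ⇑f y (m+1) = phiMap ⇑f y b' := by
          apply phi_const_of_gap (m+1) hb'le
          intro k hk1 hk2 hkS
          have := hb'max k ⟨hkS, hk2⟩
          omega
        have hmyb' : my ≤ b' := hb'max my ⟨hmyS, hmy2⟩
        have hE3y := E3 htheta hlam hf hmyS hb'S hmyb'
        have hbd : (b':ℝ) - my ≤ 2 := by
          have e1 : (b':ℝ) ≤ (m:ℝ) + 1 := by exact_mod_cast hb'le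
          have e2 : (m:ℝ) - 1 ≤ (my:ℝ) := by exact_mod_cast hmy1
          linarith
        have hmm : theta * ((b':ℝ) - my) ≤ theta * 2 :=
          mul_le_mul_of_nonneg_left hbd (le_of_lt hth0)
        rw [heq] at hF2
        linarith
      · have h5 : phiMap ⇑f x m ≤ phiMap ⇑f x la := phi_mono_S htheta hlam hf hmS hmla
        have h5' : (phiMap ⇑f x m : ℝ) ≤ (phiMap ⇑f x la : ℝ) := by exact_mod_cast h5
        have hmyla : my ≤ la := hminy la laSy
        have hE3y := E3 htheta hlam hf hmyS laSy hmyla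
        have hbd : (la:ℝ) - my ≤ 2 := by
          have e2 : (m:ℝ) - 1 ≤ (my:ℝ) := by exact_mod_cast hmy1
          have e3 : (la:ℝ) - 1 ≤ (m:ℝ) := by
            have : la - 1 ≤ m := by omega
            exact_mod_cast this
          linarith
        have hmm : theta * ((la:ℝ) - my) ≤ theta * 2 :=
          mul_le_mul_of_nonneg_left hbd (le_of_lt hth0)
        linarith
    by_cases hTmy : T ≤ (my:ℝ)
    · have hevaly := hexty.2.2.2 my hmyS hminy T hTmy
      have hcast : (my:ℝ) ≤ (m:ℝ) + 1 := by exact_mod_cast hmy2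
      rw [hevalx, hevaly]
      linarith only [hqmy, hcast, hΛ0, htheta]
    · push_neg at hTmy
      have hly := nodeLip_lb htheta hc10 hSy hexty hupy hdny hmyS T
      have hmax0 : max ((my:ℝ) - T) 0 = 0 := max_eq_right (by linarith)
      rw [hmax0, mul_zero] at hly
      have hTm' : T ≤ (m:ℝ) := le_of_lt hTm
      rw [hevalx]
      linarith only [hly, hqmy, hTm', hΛ0, htheta]
  · -- B-max : impossible
    exfalso
    have := hmaxs la laSx
    have h5 : (la:ℝ) ≤ (M:ℝ) := by exact_mod_cast this
    linarith

end OneSided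
end Stmt18

namespace Stmt18
open Real

section Final
variable {Z : Type u} {W : Type v} [MetricSpace Z] [MetricSpace W]
variable {theta lam : ℝ} {f : Z ≃ₜ W}

lemma g1 (htheta : 1 ≤ theta) (hlam : 1 ≤ lam) (hf : IsPQS theta lam ⇑f)
    (x y : Z) (la : ℤ) (hxy : x ≠ y)
    (hla1 : (2:ℝ)^(-la-1) < dist x y) (hla2 : dist x y ≤ (2:ℝ)^(-la))
    {Phix : ℝ → ℝ}
    (hextx : IsLinearExtension (scaleSpectrum x) (phiMap ⇑f x) Phix)
    {T : ℝ} (hT : T ≤ -(Real.logb 2 (dist x y))) :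
    Phix T ≤ -(Real.logb 2 (dist (f x) (f y))) + 10*(theta + Real.logb 2 lam + 1) := by
  have hΛ0 : 0 ≤ Real.logb 2 lam := Real.logb_nonneg one_lt_two hlam
  have hth0 : (0:ℝ) < theta := lt_of_lt_of_le one_pos htheta
  have hc10 : (0:ℝ) ≤ 3*(theta + Real.logb 2 lam + 1) := by nlinarith
  have laSx : la ∈ scaleSpectrum x := la_mem x y la hxy hla1 hla2
  have hdla : 0 < dist x y := dist_pos.2 hxy
  have hTla : T < (la:ℝ) + 1 := by
    have := (zpow_lt_dist hdla).1 hla1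
    push_cast at this; linarith
  have hupx : ∀ l₁ ∈ scaleSpectrum x, ∀ l₂ ∈ scaleSpectrum x, l₁ ≤ l₂ →
      (phiMap ⇑f x l₂ : ℝ) ≤ phiMap ⇑f x l₁ + theta * ((l₂:ℝ) - l₁)
        + 3*(theta + Real.logb 2 lam + 1) :=
    fun l₁ h1 l₂ h2 h => E3 htheta hlam hf h1 h2 h
  have hdnx : ∀ l₁ ∈ scaleSpectrum x, ∀ l₂ ∈ scaleSpectrum x, l₁ ≤ l₂ →
      (phiMap ⇑f x l₁ : ℝ) + ((l₂:ℝ) - l₁)/theta - 3*(theta + Real.logb 2 lam + 1)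
        ≤ phiMap ⇑f x l₂ :=
    fun l₁ h1 l₂ h2 h => E4 htheta hlam hf h1 h2 h
  have hux := nodeLip_ub htheta hc10 ⟨la, laSx⟩ hextx hupx hdnx laSx T
  have hm1 : max (T - (la:ℝ)) 0 ≤ 1 := max_le (by linarith) (by norm_num)
  have hmm1 := mul_le_mul_of_nonneg_left hm1 (le_of_lt hth0)
  have hE2x := E2 htheta hlam hf x y la hxy hla1 hla2
  linarith

end Final

/-- numeric assembly of the hyperbolic-cone estimate -/
lemma rho_bound {D A B c9 c10 : ℝ} (hD : 0 < D) (hc9 : 0 ≤ c9) (hc10 : 0 ≤ c10)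
    (hA : Real.logb 2 D ≤ c9 - A) (hB : Real.logb 2 D ≤ c9 - B)
    (hAB : A - B ≤ c10) (hBA : B - A ≤ c10) :
    2 * Real.log ((D + max ((2:ℝ)^(-A)) ((2:ℝ)^(-B))) / Real.sqrt ((2:ℝ)^(-A) * (2:ℝ)^(-B)))
      ≤ 2*(c9 + c10 + 1)*Real.log 2 := by
  have hsA : (0:ℝ) < 2^(-A) := rpow2_pos _
  have hsB : (0:ℝ) < 2^(-B) := rpow2_pos _
  have hprod : (2:ℝ)^(-A) * (2:ℝ)^(-B) = (2:ℝ)^(-A + -B) := (Real.rpow_add two_pos _ _).symm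
  have hsqrt : Real.sqrt ((2:ℝ)^(-A) * (2:ℝ)^(-B)) = (2:ℝ)^((-A + -B)/2) := by
    rw [hprod, Real.sqrt_eq_rpow, ← Real.rpow_mul (le_of_lt two_pos)]
    congr 1
    ring
  have hden : (0:ℝ) < (2:ℝ)^((-A + -B)/2) := rpow2_pos _
  have hDleA : D ≤ (2:ℝ)^(c9 - A) := (le_rpow_iff' hD).2 hA
  have hmono : ∀ u v : ℝ, u ≤ v → (2:ℝ)^u ≤ (2:ℝ)^v :=
    fun u v huv => (Real.rpow_le_rpow_left_iff one_lt_two).2 huv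
  -- max bound
  have hmax : max ((2:ℝ)^(-A)) ((2:ℝ)^(-B)) ≤ (2:ℝ)^(c10/2 + (-A + -B)/2) := by
    apply max_le
    · exact hmono _ _ (by linarith)
    · exact hmono _ _ (by linarith)
  have hDle : D ≤ (2:ℝ)^(c9 + c10/2 + (-A + -B)/2) :=
    le_trans hDleA (hmono _ _ (by linarith))
  -- numerator bound
  have hnum : D + max ((2:ℝ)^(-A)) ((2:ℝ)^(-B))
      ≤ (2:ℝ)^(c9 + c10 + 1) * (2:ℝ)^((-A + -B)/2) := by
    have e1 : (2:ℝ)^(c9 + c10/2 + (-A + -B)/2) ≤ (2:ℝ)^(c9 + c10 + (-A + -B)/2) :=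
      hmono _ _ (by linarith)
    have e2 : (2:ℝ)^(c10/2 + (-A + -B)/2) ≤ (2:ℝ)^(c9 + c10 + (-A + -B)/2) :=
      hmono _ _ (by linarith)
    have e3 : (2:ℝ)^(c9 + c10 + 1) * (2:ℝ)^((-A + -B)/2) = 2 * (2:ℝ)^(c9 + c10 + (-A + -B)/2) := by
      rw [← Real.rpow_add two_pos]
      rw [show c9 + c10 + 1 + (-A + -B)/2 = 1 + (c9 + c10 + (-A + -B)/2) by ring]
      rw [Real.rpow_add two_pos, Real.rpow_one]
    rw [e3]
    linarith
  have hratio : (D + max ((2:ℝ)^(-A)) ((2:ℝ)^(-B))) / Real.sqrt ((2:ℝ)^(-A) * (2:ℝ)^(-B))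
      ≤ (2:ℝ)^(c9 + c10 + 1) := by
    rw [hsqrt, div_le_iff₀ hden]
    exact hnum
  have hratio0 : (0:ℝ) < (D + max ((2:ℝ)^(-A)) ((2:ℝ)^(-B))) / Real.sqrt ((2:ℝ)^(-A) * (2:ℝ)^(-B)) := by
    apply div_pos
    · have := le_max_left ((2:ℝ)^(-A)) ((2:ℝ)^(-B))
      linarith
    · rw [hsqrt]; exact hden
  have hlog := Real.log_le_log hratio0 hratio
  rw [Real.log_rpow two_pos] at hlog
  linarith

end Stmt18


open Stmt18

/-- for `t ≥ d_Z(x,y)`,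
`ρ_h(f_x(x,t), f_y(y,t)) ≤ C(θ,λ)`. -/
theorem stmt18 (theta lam : ℝ) (htheta : 1 ≤ theta) (hlam : 1 ≤ lam) :
    ∃ C : ℝ, 0 ≤ C ∧
      ∀ (Z : Type u) (W : Type v) [MetricSpace Z] [MetricSpace W],
        AtLeastThree Z → AtLeastThree W →
        ∀ (f : Z ≃ₜ W), IsPQS theta lam f →
        ∀ (x y : Z), x ≠ y →
        ∀ Phix Phiy : ℝ → ℝ,
          IsLinearExtension (scaleSpectrum x) (phiMap f x) Phix →
          IsLinearExtension (scaleSpectrum y) (phiMap f y) Phiy →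
          ∀ t : ℝ, dist x y ≤ t →
            rhoH (f x, (2:ℝ) ^ (-(Phix (Real.logb 2 (1/t)))))
              (f y, (2:ℝ) ^ (-(Phiy (Real.logb 2 (1/t))))) ≤ C := by
  have hΛ0 : 0 ≤ Real.logb 2 lam := Real.logb_nonneg one_lt_two hlam
  have hth0 : (0:ℝ) < theta := lt_of_lt_of_le one_pos htheta
  have hlog2 : (0:ℝ) < Real.log 2 := Real.log_pos one_lt_two
  refine ⟨104*(theta + Real.logb 2 lam + 1)*Real.log 2, by nlinarith, ?_⟩
  intro Z W _ _ _ _ f hf x y hxy Phix Phiy hextx hexty t ht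
  have ha : 0 < dist x y := dist_pos.2 hxy
  have hta : 0 < t := lt_of_lt_of_le ha ht
  have hyx : y ≠ x := Ne.symm hxy
  set T := Real.logb 2 (1/t) with hTdef
  have hTeq : T = -(Real.logb 2 t) := by rw [hTdef, one_div, Real.logb_inv]
  have hT : T ≤ -(Real.logb 2 (dist x y)) := by
    have := (Real.logb_le_logb one_lt_two ha hta).2 ht
    linarith
  have hT' : T ≤ -(Real.logb 2 (dist y x)) := by rwa [dist_comm]
  -- the scale la
  set la := ⌊-(Real.logb 2 (dist y x))⌋ with hladef
  have hann := mem_ann_floor hyx (x := x)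
  have hla1 : (2:ℝ)^(-la-1) < dist x y := by
    rw [dist_comm]; exact hann.1
  have hla2 : dist x y ≤ (2:ℝ)^(-la) := by
    rw [dist_comm]; exact hann.2
  have hla1' : (2:ℝ)^(-la-1) < dist y x := by rwa [dist_comm]
  have hla2' : dist y x ≤ (2:ℝ)^(-la) := by rwa [dist_comm]
  -- main estimates
  have hA := g1 htheta hlam hf x y la hxy hla1 hla2 hextx hT
  have hB0 := g1 htheta hlam hf y x la hyx hla1' hla2' hexty hT'
  have hB : Phiy T ≤ -(Real.logb 2 (dist (f x) (f y))) + 10*(theta + Real.logb 2 lam + 1) := by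
    rwa [dist_comm (f y) (f x)] at hB0
  have hAB := one_sided htheta hlam hf x y la hxy hla1 hla2 hextx hexty hT
  have hBA := one_sided htheta hlam hf y x la hyx hla1' hla2' hexty hextx hT'
  -- numeric conclusion
  have hD : 0 < dist (f x) (f y) := dist_f_pos f hxy
  have hkey := rho_bound (D := dist (f x) (f y)) (A := Phix T) (B := Phiy T)
    (c9 := 10*(theta + Real.logb 2 lam + 1)) (c10 := 40*(theta + Real.logb 2 lam + 1))
    hD (by nlinarith) (by nlinarith) (by linarith) (by linarith) (by linarith) (by linarith)
  have hrw : rhoH (f x, (2:ℝ) ^ (-(Phix T))) (f y, (2:ℝ) ^ (-(Phiy T)))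
      = 2 * Real.log ((dist (f x) (f y) + max ((2:ℝ)^(-(Phix T))) ((2:ℝ)^(-(Phiy T))))
        / Real.sqrt ((2:ℝ)^(-(Phix T)) * (2:ℝ)^(-(Phiy T)))) := rfl
  rw [hrw]
  calc 2 * Real.log ((dist (f x) (f y) + max ((2:ℝ)^(-(Phix T))) ((2:ℝ)^(-(Phiy T))))
        / Real.sqrt ((2:ℝ)^(-(Phix T)) * (2:ℝ)^(-(Phiy T))))
      ≤ 2*(10*(theta + Real.logb 2 lam + 1) + 40*(theta + Real.logb 2 lam + 1) + 1)*Real.log 2 := hkey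
    _ ≤ 104*(theta + Real.logb 2 lam + 1)*Real.log 2 := by nlinarith
end
end
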